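/- arXiv:1709.02854 — 9 statements merged into one kernel-verified Lean document; each statement's English description precedes it below -/
import Mathlib

section
/- Let g = V₁ ⊕ V₂ be a step-2 stratified Lie algebra and let P ⊆ V₁ be a linear subspace. If dim P ≥ dim V₁ - 1 (i.e., P = V₁ or P is a hyperplane of V₁), then [P, V₁] = V₂. -/
/-- The span of brackets `⁅x, y⁆` with `x ∈ P`, `y ∈ Q`. -/
def bracketSpan {L : Type*} [LieRing L] [LieAlgebra ℝ L] (P Q : Submodule ℝ L) :
    Submodule ℝ L :=
  Submodule.span ℝ {z | ∃ x ∈ P, ∃ y ∈ Q, z = ⁅x, y⁆}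

/-- If `g = V₁ ⊕ V₂` is a step-2 stratified Lie algebra and `P ⊆ V₁` is a subspace with
`dim P ≥ dim V₁ - 1` (i.e. `P = V₁` or a hyperplane of `V₁`), then `[P, V₁] = V₂`. -/
theorem stmt1 {L : Type*} [LieRing L] [LieAlgebra ℝ L] [FiniteDimensional ℝ L]
    (V₁ V₂ : Submodule ℝ L)
    (hsum : V₁ ⊔ V₂ = ⊤) (hinter : V₁ ⊓ V₂ = ⊥)
    (hstrat : bracketSpan V₁ V₁ = V₂)
    (hcentral : ∀ x : L, ∀ z ∈ V₂, ⁅x, z⁆ = 0)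
    (P : Submodule ℝ L) (hP : P ≤ V₁)
    (hdim : Module.finrank ℝ V₁ ≤ Module.finrank ℝ P + 1) :
    bracketSpan P V₁ = V₂ := by
  -- find v with V₁ ≤ P ⊔ span {v}, v ∈ V₁
  obtain ⟨v, hv1, hV⟩ : ∃ v, v ∈ V₁ ∧ V₁ ≤ P ⊔ Submodule.span ℝ {v} := by
    by_cases hPV : V₁ ≤ P
    · exact ⟨0, V₁.zero_mem, le_trans hPV le_sup_left⟩
    · obtain ⟨v, hv1, hvP⟩ := SetLike.not_le_iff_exists.mp hPV
      refine ⟨v, hv1, ?_⟩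
      have hle : P ⊔ Submodule.span ℝ {v} ≤ V₁ := by
        refine sup_le hP ?_
        rw [Submodule.span_le, Set.singleton_subset_iff]; exact hv1
      have hv0 : v ≠ 0 := fun h => hvP (h ▸ P.zero_mem)
      have hinf : P ⊓ Submodule.span ℝ {v} = ⊥ := by
        rw [eq_bot_iff]
        rintro x ⟨hxP, hxs⟩
        obtain ⟨a, rfl⟩ := Submodule.mem_span_singleton.mp hxs
        rcases eq_or_ne a 0 with rfl | ha
        · simp
        · exact absurd (by simpa [smul_smul, inv_mul_cancel₀ ha] using P.smul_mem a⁻¹ hxP : v ∈ P) hvP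
      have hrank : Module.finrank ℝ P + 1 = Module.finrank ℝ (P ⊔ Submodule.span ℝ {v} : Submodule ℝ L) := by
        have := Submodule.finrank_sup_add_finrank_inf_eq P (Submodule.span ℝ {v})
        rw [hinf, finrank_span_singleton hv0] at this
        simpa using this.symm
      exact le_of_eq (Submodule.eq_of_le_of_finrank_le hle (hrank ▸ hdim)).symm
  -- the two inclusions
  apply le_antisymm
  · rw [← hstrat]
    apply Submodule.span_mono
    rintro z ⟨x, hx, y, hy, rfl⟩
    exact ⟨x, hP hx, y, hy, rfl⟩
  · rw [← hstrat]
    apply Submodule.span_le.mpr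
    rintro z ⟨x, hx, y, hy, rfl⟩
    -- decompose x and y
    obtain ⟨p, hp, s, hs, rfl⟩ := Submodule.mem_sup.mp (hV hx)
    obtain ⟨a, rfl⟩ := Submodule.mem_span_singleton.mp hs
    obtain ⟨q, hq, t, ht, rfl⟩ := Submodule.mem_sup.mp (hV hy)
    obtain ⟨b, rfl⟩ := Submodule.mem_span_singleton.mp ht
    have key : ⁅p + a • v, q + b • v⁆
        = ⁅p, q⁆ + b • ⁅p, v⁆ + a • (-⁅q, v⁆) := by
      simp [lie_add, add_lie, lie_smul, smul_lie, lie_self, lie_skew, smul_smul, smul_neg]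
      module
    rw [key]
    have mem : ∀ x' ∈ P, ∀ y' ∈ V₁, ⁅x', y'⁆ ∈ bracketSpan P V₁ := fun x' hx' y' hy' =>
      Submodule.subset_span ⟨x', hx', y', hy', rfl⟩
    exact Submodule.add_mem _
      (Submodule.add_mem _ (mem p hp q (hP hq)) (Submodule.smul_mem _ _ (mem p hp v hv1)))
      (Submodule.smul_mem _ _ (Submodule.neg_mem _ (mem q hq v hv1)))
end

section
/- Let g = V₁ ⊕ V₂ be a step-2 stratified Lie algebra with dim V₁ = r ≥ 4 and dim V₂ = 2. If every vector of V₁ has rank at most 1 (i.e., dim [X, V₁] ≤ 1 for every X ∈ V₁), then a contradiction arises; hence there exists a vector X ∈ V₁ with dim [X, V₁] = 2. -/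
/-- If `w` is "dependent" with each of two independent vectors `u`, `v`, then `w = 0`. -/
lemma aux_dep {M : Type*} [AddCommGroup M] [Module ℝ M] {u v w : M}
    (huv : ∀ a b : ℝ, a • u + b • v = 0 → a = 0 ∧ b = 0)
    (h1 : ∃ a b : ℝ, a • w + b • u = 0 ∧ ¬(a = 0 ∧ b = 0))
    (h2 : ∃ a b : ℝ, a • w + b • v = 0 ∧ ¬(a = 0 ∧ b = 0)) : w = 0 := by
  have hu : u ≠ 0 := by
    intro h
    have := huv 1 0 (by simp [h])
    exact one_ne_zero this.1
  have hv : v ≠ 0 := by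
    intro h
    have := huv 0 1 (by simp [h])
    exact one_ne_zero this.2
  obtain ⟨a, b, hab, hab0⟩ := h1
  obtain ⟨c, d, hcd, hcd0⟩ := h2
  have ha : a ≠ 0 := by
    intro h
    subst h
    simp only [zero_smul, zero_add] at hab
    rcases smul_eq_zero.mp hab with h | h
    · exact hab0 ⟨rfl, h⟩
    · exact hu h
  have hc : c ≠ 0 := by
    intro h
    subst h
    simp only [zero_smul, zero_add] at hcd
    rcases smul_eq_zero.mp hcd with h | h
    · exact hcd0 ⟨rfl, h⟩
    · exact hv h
  -- w = (-b/a) • u and w = (-d/c) • v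
  have hw1 : w = (-b / a) • u := by
    have : a • w = (-b) • u := by
      rw [neg_smul]
      linear_combination (norm := module) hab
    calc w = a⁻¹ • (a • w) := by rw [smul_smul, inv_mul_cancel₀ ha, one_smul]
    _ = (-b / a) • u := by rw [this, smul_smul]; congr 1; field_simp
  have hw2 : w = (-d / c) • v := by
    have : c • w = (-d) • v := by
      rw [neg_smul]
      linear_combination (norm := module) hcd
    calc w = c⁻¹ • (c • w) := by rw [smul_smul, inv_mul_cancel₀ hc, one_smul]
    _ = (-d / c) • v := by rw [this, smul_smul]; congr 1; field_simp
  have : (-b / a) • u + (-(-d / c)) • v = 0 := by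
    rw [neg_smul, ← hw1, ← hw2]
    abel
  have h0 := huv _ _ this
  rw [hw1, h0.1, zero_smul]

/-- Core lemma: there exist `X, Y, Z ∈ V₁` with `⁅X,Y⁆`, `⁅X,Z⁆` independent. -/
lemma core {L : Type*} [LieRing L] [LieAlgebra ℝ L] [FiniteDimensional ℝ L]
    (V₁ V₂ : Submodule ℝ L)
    (hstrat : bracketSpan V₁ V₁ = V₂)
    (hV₂ : Module.finrank ℝ V₂ = 2) :
    ∃ X ∈ V₁, ∃ Y ∈ V₁, ∃ Z ∈ V₁, LinearIndependent ℝ ![⁅X, Y⁆, ⁅X, Z⁆] := by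
  set S : Set L := {z | ∃ x ∈ V₁, ∃ y ∈ V₁, z = ⁅x, y⁆} with hS
  have hspan : Module.finrank ℝ (Submodule.span ℝ S) = 2 := by
    rw [show Submodule.span ℝ S = V₂ from hstrat]; exact hV₂
  -- first: there are two independent elements of S
  have hex : ∃ u ∈ S, ∃ v ∈ S, LinearIndependent ℝ ![u, v] := by
    by_contra hc
    push_neg at hc
    -- then span S has finrank ≤ 1
    have : ∃ s₀ : L, S ⊆ (Submodule.span ℝ {s₀} : Submodule ℝ L) := by
      by_cases h0 : ∀ s ∈ S, s = (0 : L)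
      · exact ⟨0, fun s hs => by rw [h0 s hs]; exact Submodule.zero_mem _⟩
      · push_neg at h0
        obtain ⟨s₀, hs₀S, hs₀⟩ := h0
        refine ⟨s₀, fun s hs => ?_⟩
        have hdep := hc s₀ hs₀S s hs
        rw [LinearIndependent.pair_iff] at hdep
        push_neg at hdep
        obtain ⟨a, b, hab, hab0⟩ := hdep
        have hb : b ≠ 0 := by
          intro h
          subst h
          simp only [zero_smul, add_zero] at hab
          rcases smul_eq_zero.mp hab with h | h
          · exact hab0 h rfl
          · exact hs₀ h
        have : s = (-a / b) • s₀ := by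
          have h' : b • s = (-a) • s₀ := by
            rw [neg_smul]
            linear_combination (norm := module) hab
          calc s = b⁻¹ • (b • s) := by rw [smul_smul, inv_mul_cancel₀ hb, one_smul]
          _ = (-a / b) • s₀ := by rw [h', smul_smul]; congr 1; field_simp
        rw [this]
        exact Submodule.smul_mem _ _ (Submodule.mem_span_singleton_self s₀)
    obtain ⟨s₀, hsub⟩ := this
    have hle : Submodule.span ℝ S ≤ Submodule.span ℝ {s₀} :=
      Submodule.span_le.mpr hsub
    have h1 : Module.finrank ℝ (Submodule.span ℝ ({s₀} : Set L)) ≤ 1 := by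
      by_cases h : s₀ = 0
      · rw [h, Submodule.span_zero_singleton]
        simp
      · rw [finrank_span_singleton h]
    have := Submodule.finrank_mono hle
    omega
  obtain ⟨u, huS, v, hvS, huv⟩ := hex
  obtain ⟨A, hA, B, hB, rfl⟩ := huS
  obtain ⟨C, hC, D, hD, rfl⟩ := hvS
  -- now either some triple works, or all mixed brackets vanish and we contradict independence
  by_contra hcon
  push_neg at hcon
  have hdep : ∀ X ∈ V₁, ∀ Y ∈ V₁, ∀ Z ∈ V₁,
      ∃ a b : ℝ, a • ⁅X, Y⁆ + b • ⁅X, Z⁆ = 0 ∧ ¬(a = 0 ∧ b = 0) := by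
    intro X hX Y hY Z hZ
    have := hcon X hX Y hY Z hZ
    rw [LinearIndependent.pair_iff] at this
    push_neg at this
    obtain ⟨a, b, hab, hab0⟩ := this
    exact ⟨a, b, hab, fun h => hab0 h.1 h.2⟩
  rw [LinearIndependent.pair_iff] at huv
  -- turn brackets ⁅X,Y⁆ pairs into aux_dep hypotheses
  have flip : ∀ (w x : L), (∃ a b : ℝ, a • w + b • x = 0 ∧ ¬(a = 0 ∧ b = 0)) →
      ∃ a b : ℝ, a • (-w) + b • x = 0 ∧ ¬(a = 0 ∧ b = 0) := by
    intro w x ⟨a, b, hab, hab0⟩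
    exact ⟨-a, b, by rw [smul_neg, neg_smul, neg_neg]; exact hab,
      fun h => hab0 ⟨neg_eq_zero.mp h.1, h.2⟩⟩
  have hAC : ⁅A, C⁆ = 0 := by
    refine aux_dep huv (hdep A hA C hC B hB) ?_
    have := hdep C hC A hA D hD
    have h2 := flip _ _ this
    rwa [← lie_skew C A, neg_neg] at h2
  have hAD : ⁅A, D⁆ = 0 := by
    refine aux_dep huv (hdep A hA D hD B hB) ?_
    have := hdep D hD A hA C hC
    obtain ⟨a, b, hab, hab0⟩ := this
    refine ⟨-a, -b, ?_, fun h => hab0 ⟨neg_eq_zero.mp h.1, neg_eq_zero.mp h.2⟩⟩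
    rw [← lie_skew A D, ← lie_skew C D]
    rw [smul_neg, smul_neg, neg_smul, neg_smul, neg_neg, neg_neg]
    exact hab
  have hBC : ⁅B, C⁆ = 0 := by
    refine aux_dep huv ?_ ?_
    · have := hdep B hB C hC A hA
      obtain ⟨a, b, hab, hab0⟩ := this
      refine ⟨a, -b, ?_, fun h => hab0 ⟨h.1, neg_eq_zero.mp h.2⟩⟩
      rw [← lie_skew A B, smul_neg, neg_smul, neg_neg]
      exact hab
    · have := hdep C hC B hB D hD
      have h2 := flip _ _ this
      rwa [← lie_skew C B, neg_neg] at h2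
  have hBD : ⁅B, D⁆ = 0 := by
    refine aux_dep huv ?_ ?_
    · have := hdep B hB D hD A hA
      obtain ⟨a, b, hab, hab0⟩ := this
      refine ⟨a, -b, ?_, fun h => hab0 ⟨h.1, neg_eq_zero.mp h.2⟩⟩
      rw [← lie_skew A B, smul_neg, neg_smul, neg_neg]
      exact hab
    · have := hdep D hD B hB C hC
      obtain ⟨a, b, hab, hab0⟩ := this
      refine ⟨-a, -b, ?_, fun h => hab0 ⟨neg_eq_zero.mp h.1, neg_eq_zero.mp h.2⟩⟩
      rw [← lie_skew B D, ← lie_skew C D]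
      rw [smul_neg, smul_neg, neg_smul, neg_smul, neg_neg, neg_neg]
      exact hab
  -- now X = A + C gives the contradiction
  have hX : A + C ∈ V₁ := V₁.add_mem hA hC
  obtain ⟨a, b, hab, hab0⟩ := hdep (A + C) hX B hB D hD
  have e1 : ⁅A + C, B⁆ = ⁅A, B⁆ := by
    rw [add_lie, ← lie_skew C B, hBC, neg_zero, add_zero]
  have e2 : ⁅A + C, D⁆ = ⁅C, D⁆ := by
    rw [add_lie, hAD, zero_add]
  rw [e1, e2] at hab
  exact hab0 (huv a b hab)

/-- In a step-2 stratified Lie algebra `g = V₁ ⊕ V₂` with `dim V₁ = r ≥ 4` and `dim V₂ = 2`,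
it cannot be that every vector of `V₁` has rank at most 1; hence there is `X ∈ V₁` with
`dim [X, V₁] = 2`. -/
theorem stmt3 {L : Type*} [LieRing L] [LieAlgebra ℝ L] [FiniteDimensional ℝ L]
    (V₁ V₂ : Submodule ℝ L)
    (hsum : V₁ ⊔ V₂ = ⊤) (hinter : V₁ ⊓ V₂ = ⊥)
    (hstrat : bracketSpan V₁ V₁ = V₂)
    (hcentral : ∀ x : L, ∀ z ∈ V₂, ⁅x, z⁆ = 0)
    (r : ℕ) (hr : 4 ≤ r) (hV₁ : Module.finrank ℝ V₁ = r)
    (hV₂ : Module.finrank ℝ V₂ = 2) :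
    ¬ (∀ X ∈ V₁, Module.finrank ℝ (bracketSpan (ℝ ∙ X) V₁) ≤ 1) ∧
    ∃ X ∈ V₁, Module.finrank ℝ (bracketSpan (ℝ ∙ X) V₁) = 2 := by
  obtain ⟨X, hX, Y, hY, Z, hZ, hind⟩ := core V₁ V₂ hstrat hV₂
  have key : Module.finrank ℝ (bracketSpan (ℝ ∙ X) V₁) = 2 := by
    have hle2 : Module.finrank ℝ (bracketSpan (ℝ ∙ X) V₁) ≤ 2 := by
      have hsub : bracketSpan (ℝ ∙ X) V₁ ≤ V₂ := by
        rw [← hstrat]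
        apply Submodule.span_mono
        rintro z ⟨x, hx, y, hy, rfl⟩
        exact ⟨x, (Submodule.span_singleton_le_iff_mem X V₁).mpr hX hx, y, hy, rfl⟩
      have := Submodule.finrank_mono hsub
      omega
    have hge2 : 2 ≤ Module.finrank ℝ (bracketSpan (ℝ ∙ X) V₁) := by
      have hsub : Submodule.span ℝ (Set.range ![⁅X, Y⁆, ⁅X, Z⁆]) ≤ bracketSpan (ℝ ∙ X) V₁ := by
        apply Submodule.span_le.mpr
        rintro z hz
        simp only [Set.mem_range] at hz
        obtain ⟨i, rfl⟩ := hz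
        fin_cases i
        · exact Submodule.subset_span ⟨X, Submodule.mem_span_singleton_self X, Y, hY, rfl⟩
        · exact Submodule.subset_span ⟨X, Submodule.mem_span_singleton_self X, Z, hZ, rfl⟩
      have h2 : Module.finrank ℝ (Submodule.span ℝ (Set.range ![⁅X, Y⁆, ⁅X, Z⁆])) = 2 := by
        rw [finrank_span_eq_card hind]
        simp
      have := Submodule.finrank_mono hsub
      omega
    omega
  refine ⟨fun h => ?_, X, hX, key⟩
  have := h X hX
  omega
end

section
/- Let g = V₁ ⊕ V₂ be a step-2 stratified Lie algebra with dim V₁ = r ≥ 3 and dim V₂ = 2. Then the set R₁ of vectors X ∈ V₁ with dim [X, V₁] ≤ 1 is contained in a proper algebraic subvariety of V₁; in particular R₁ ≠ V₁. -/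
/-!
If every `ad_X` on `V₁` had rank at most one, take two brackets `[X₀, Y₀]`, `[X₁, Y₁]` spanning
`V₂` and functionals `φ, ψ` dual to them. All 2 × 2 minors
`φ [X, Y] ψ [X, Z] - φ [X, Z] ψ [X, Y]` vanish; polarizing in `X` and using `[Y₀, Y₀] = 0` forces
`ψ` to vanish on every bracket, contradicting `ψ [X₁, Y₁] = 1`. Hence some `X₀` has rank at least
two: `[X₀, Y]`, `[X₀, Z]` are independent for some `Y, Z`. With `φ, ψ` now dual to these two, the
same minor is a quadratic polynomial in the coordinates of `X` which equals `1` at `X₀` and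
vanishes wherever `ad_X` has rank at most one.
-/

open Module Submodule

section LinearAlgebra

variable {K V : Type*} [Field K] [AddCommGroup V] [Module K V]

theorem exists_linearIndependent_pair_of_two_le_finrank_span {S : Set V}
    (hS : 2 ≤ finrank K (span K S)) : ∃ u ∈ S, ∃ v ∈ S, LinearIndependent K ![u, v] := by
  by_contra! hdep
  obtain ⟨v, hv⟩ : ∃ v : V, S ⊆ K ∙ v := by
    by_cases h : ∃ v ∈ S, v ≠ 0
    · obtain ⟨v, hvS, hv⟩ := h
      refine ⟨v, fun u hu => mem_span_singleton.mpr ?_⟩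
      by_contra! hne
      exact hdep u hu v hvS (linearIndependent_fin2.mpr ⟨hv, hne⟩)
    · push Not at h
      exact ⟨0, fun u hu => by simp [h u hu]⟩
  have : finrank K (span K S) ≤ 1 :=
    calc finrank K (span K S) ≤ finrank K (K ∙ v) := finrank_mono (span_le.mpr hv)
      _ ≤ 1 := by simpa using finrank_span_le_card ({v} : Set V)
  omega

theorem exists_dual_apply_eq_one_of_notMem_span_singleton {u v : V} (h : u ∉ K ∙ v) :
    ∃ f : Dual K V, f u = 1 ∧ f v = 0 := by
  obtain ⟨f, hfu, hf⟩ := exists_dual_map_eq_bot_of_notMem h inferInstance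
  refine ⟨(f u)⁻¹ • f, inv_mul_cancel₀ hfu, ?_⟩
  have : f v = 0 :=
    (Submodule.eq_bot_iff _).mp hf (f v) (mem_map_of_mem (mem_span_singleton_self v))
  simp [this]

theorem LinearIndependent.exists_dual_pair {u v : V} (h : LinearIndependent K ![u, v]) :
    ∃ φ ψ : Dual K V, φ u = 1 ∧ φ v = 0 ∧ ψ u = 0 ∧ ψ v = 1 := by
  have hu : u ∉ K ∙ v := by
    simpa [mem_span_singleton] using (linearIndependent_fin2.mp h).2
  have hv : v ∉ K ∙ u := by
    simpa [mem_span_singleton] using (linearIndependent_fin2.mp (pair_symm_iff.mp h)).2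
  obtain ⟨φ, hφu, hφv⟩ := exists_dual_apply_eq_one_of_notMem_span_singleton hu
  obtain ⟨ψ, hψv, hψu⟩ := exists_dual_apply_eq_one_of_notMem_span_singleton hv
  exact ⟨φ, ψ, hφu, hφv, hψu, hψv⟩

theorem apply_mul_apply_comm_of_finrank_le_one {S : Submodule K V} [Module.Finite K S]
    (hS : finrank K S ≤ 1) {u v : V} (hu : u ∈ S) (hv : v ∈ S) (f g : Dual K V) :
    f u * g v = f v * g u := by
  obtain ⟨w, hw⟩ := finrank_le_one_iff.mp hS
  obtain ⟨a, ha⟩ := hw ⟨u, hu⟩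
  obtain ⟨c, hc⟩ := hw ⟨v, hv⟩
  rw [Subtype.ext_iff, coe_smul] at ha hc
  subst ha hc
  simp only [map_smul, smul_eq_mul]
  ring

end LinearAlgebra

section Bilinear

variable {K V V' W ι : Type*} [Field K] [AddCommGroup V] [Module K V] [AddCommGroup V']
  [Module K V'] [AddCommGroup W] [Module K W]

theorem LinearMap.exists_linearIndependent_pair_of_two_le_finrank_range {f : V →ₗ[K] W}
    (h : 2 ≤ finrank K (range f)) : ∃ x y, LinearIndependent K ![f x, f y] := by
  obtain ⟨_, ⟨x, rfl⟩, _, ⟨y, rfl⟩, hxy⟩ :=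
    exists_linearIndependent_pair_of_two_le_finrank_span (S := Set.range f)
      (by rwa [← coe_range, span_eq])
  exact ⟨x, y, hxy⟩

theorem LinearMap.exists_mvPolynomial_ne_zero_of_two_le_finrank_range [FiniteDimensional K W]
    [Fintype ι] [DecidableEq ι] (b : Basis ι K V) (A : V →ₗ[K] V' →ₗ[K] W) {x₀ : V}
    (hx₀ : 2 ≤ finrank K (range (A x₀))) :
    ∃ p : MvPolynomial ι K, p ≠ 0 ∧
      ∀ x, finrank K (range (A x)) ≤ 1 → MvPolynomial.eval (b.repr x) p = 0 := by
  obtain ⟨y, z, hyz⟩ := exists_linearIndependent_pair_of_two_le_finrank_range hx₀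
  obtain ⟨φ, ψ, hφy, hφz, hψy, hψz⟩ := hyz.exists_dual_pair
  let q (f : Dual K W) (w : V') : MvPolynomial ι K :=
    (f ∘ₗ A.flip w).toMvPolynomial b (Basis.singleton Unit K) ()
  have hq (f : Dual K W) (w : V') (x : V) : MvPolynomial.eval (b.repr x) (q f w) = f (A x w) := by
    simp [q, toMvPolynomial_eval_eq_apply]
  refine ⟨q φ y * q ψ z - q φ z * q ψ y, fun hp => ?_, fun x hx => ?_⟩
  · simpa [hq, hφy, hφz, hψy, hψz] using congrArg (MvPolynomial.eval (b.repr x₀)) hp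
  · rw [map_sub, map_mul, map_mul, hq, hq, hq, hq, sub_eq_zero]
    exact apply_mul_apply_comm_of_finrank_le_one hx (mem_range_self _ y) (mem_range_self _ z) φ ψ

namespace LinearMap.IsAlt

variable {B : V →ₗ[K] V →ₗ[K] W} (hB : B.IsAlt)
include hB

theorem apply_eq_zero_of_forall_det_eq_zero (φ ψ : Dual K W)
    (hdet : ∀ x y z, φ (B x y) * ψ (B x z) = φ (B x z) * ψ (B x y)) {x₀ y₀ : V}
    (h₁ : φ (B x₀ y₀) = 1) (h₀ : ψ (B x₀ y₀) = 0) (x y : V) : ψ (B x y) = 0 := by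
  have polar (x x' y z : V) : φ (B x y) * ψ (B x' z) + φ (B x' y) * ψ (B x z) =
      φ (B x z) * ψ (B x' y) + φ (B x' z) * ψ (B x y) := by
    have := hdet (x + x') y z
    simp only [map_add, LinearMap.add_apply] at this
    linear_combination this - hdet x y z - hdet x' y z
  have hx₀ (y : V) : ψ (B x₀ y) = 0 := by simpa [h₀, h₁] using (hdet x₀ y y₀).symm
  have hψ (x y : V) : ψ (B x y) = φ (B x₀ y) * ψ (B x y₀) := by
    have := polar x₀ x y₀ y
    rw [h₁, h₀, hx₀] at this
    linear_combination this
  have hy₀ (x : V) : ψ (B x y₀) = 0 := by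
    rw [← hB.neg, map_neg, hψ, hB.self_eq_zero, map_zero, mul_zero, neg_zero]
  rw [hψ, hy₀, mul_zero]

theorem finrank_span_le_one_of_forall_finrank_range_le_one [FiniteDimensional K W]
    (h : ∀ x, finrank K (range (B x)) ≤ 1) :
    finrank K (span K {w | ∃ x y, B x y = w}) ≤ 1 := by
  by_contra! h2
  obtain ⟨_, ⟨x₀, y₀, rfl⟩, _, ⟨x₁, y₁, rfl⟩, hind⟩ :=
    exists_linearIndependent_pair_of_two_le_finrank_span h2
  obtain ⟨φ, ψ, h₁, -, h₀, hψ⟩ := hind.exists_dual_pair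
  have hdet (x y z : V) : φ (B x y) * ψ (B x z) = φ (B x z) * ψ (B x y) :=
    apply_mul_apply_comm_of_finrank_le_one (h x) (mem_range_self _ y) (mem_range_self _ z) φ ψ
  exact one_ne_zero (hψ ▸ hB.apply_eq_zero_of_forall_det_eq_zero φ ψ hdet h₁ h₀ x₁ y₁)

end LinearMap.IsAlt

end Bilinear

section Lie

variable {R L : Type*} [CommRing R] [LieRing L] [LieAlgebra R L]

def Submodule.lieBracketOn (V : Submodule R L) : V →ₗ[R] V →ₗ[R] L :=
  (LieAlgebra.ad R L : L →ₗ[R] Module.End R L).compl₁₂ V.subtype V.subtype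

@[simp]
theorem Submodule.lieBracketOn_apply (V : Submodule R L) (x y : V) :
    V.lieBracketOn x y = ⁅(x : L), (y : L)⁆ :=
  rfl

theorem Submodule.isAlt_lieBracketOn (V : Submodule R L) : V.lieBracketOn.IsAlt :=
  fun x => lie_self (x : L)

end Lie

section BracketSpan

variable {L : Type*} [LieRing L] [LieAlgebra ℝ L] (V : Submodule ℝ L)

theorem Submodule.range_lieBracketOn_apply (x : V) :
    LinearMap.range (V.lieBracketOn x) = bracketSpan (ℝ ∙ (x : L)) V := by
  refine le_antisymm ?_ (span_le.mpr ?_)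
  · rintro _ ⟨y, rfl⟩
    exact subset_span ⟨x, mem_span_singleton_self _, y, y.2, rfl⟩
  · rintro _ ⟨_, hx', y, hy, rfl⟩
    obtain ⟨c, rfl⟩ := mem_span_singleton.mp hx'
    exact ⟨c • ⟨y, hy⟩, by simp⟩

theorem Submodule.span_lieBracketOn :
    span ℝ {w | ∃ x y, V.lieBracketOn x y = w} = bracketSpan V V := by
  congr 1
  ext w
  constructor
  · rintro ⟨x, y, rfl⟩
    exact ⟨x, x.2, y, y.2, rfl⟩
  · rintro ⟨x, hx, y, hy, rfl⟩
    exact ⟨⟨x, hx⟩, ⟨y, hy⟩, rfl⟩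

end BracketSpan

theorem stmt4_general {L : Type*} [LieRing L] [LieAlgebra ℝ L] [FiniteDimensional ℝ L]
    (V₁ V₂ : Submodule ℝ L)
    (hstrat : bracketSpan V₁ V₁ = V₂)
    (r : ℕ) (hV₁ : Module.finrank ℝ V₁ = r)
    (hV₂ : Module.finrank ℝ V₂ = 2) :
    (∃ (b : Module.Basis (Fin r) ℝ V₁) (p : MvPolynomial (Fin r) ℝ), p ≠ 0 ∧
      ∀ X : V₁, Module.finrank ℝ (bracketSpan (ℝ ∙ (X : L)) V₁) ≤ 1 →
        MvPolynomial.eval (fun i => b.repr X i) p = 0) ∧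
    ∃ X ∈ V₁, 2 ≤ Module.finrank ℝ (bracketSpan (ℝ ∙ X) V₁) := by
  obtain ⟨X₀, hX₀⟩ : ∃ X₀ : V₁, 2 ≤ finrank ℝ (LinearMap.range (V₁.lieBracketOn X₀)) := by
    by_contra! h
    have := V₁.isAlt_lieBracketOn.finrank_span_le_one_of_forall_finrank_range_le_one
      fun X => Nat.le_of_lt_succ (h X)
    rw [span_lieBracketOn, hstrat, hV₂] at this
    omega
  let b : Basis (Fin r) ℝ V₁ := (finBasis ℝ V₁).reindex (finCongr hV₁)
  obtain ⟨p, hp, hvanish⟩ :=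
    V₁.lieBracketOn.exists_mvPolynomial_ne_zero_of_two_le_finrank_range b hX₀
  refine ⟨⟨b, p, hp, fun X hX => hvanish X (by rwa [range_lieBracketOn_apply])⟩, X₀, X₀.2, ?_⟩
  rwa [← range_lieBracketOn_apply]

/-- In a step-2 stratified Lie algebra `g = V₁ ⊕ V₂` with `dim V₁ = r ≥ 3`, `dim V₂ = 2`,
the set `R₁` of vectors `X ∈ V₁` of rank at most 1 is contained in a proper algebraic
subvariety of `V₁` (the zero set, in coordinates w.r.t. a basis of `V₁`, of a nonzero
polynomial); in particular `R₁ ≠ V₁`. -/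
theorem stmt4 {L : Type*} [LieRing L] [LieAlgebra ℝ L] [FiniteDimensional ℝ L]
    (V₁ V₂ : Submodule ℝ L)
    (hsum : V₁ ⊔ V₂ = ⊤) (hinter : V₁ ⊓ V₂ = ⊥)
    (hstrat : bracketSpan V₁ V₁ = V₂)
    (hcentral : ∀ x : L, ∀ z ∈ V₂, ⁅x, z⁆ = 0)
    (r : ℕ) (hr : 3 ≤ r) (hV₁ : Module.finrank ℝ V₁ = r)
    (hV₂ : Module.finrank ℝ V₂ = 2) :
    (∃ (b : Module.Basis (Fin r) ℝ V₁) (p : MvPolynomial (Fin r) ℝ), p ≠ 0 ∧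
      ∀ X : V₁, Module.finrank ℝ (bracketSpan (ℝ ∙ (X : L)) V₁) ≤ 1 →
        MvPolynomial.eval (fun i => b.repr X i) p = 0) ∧
    ∃ X ∈ V₁, 2 ≤ Module.finrank ℝ (bracketSpan (ℝ ∙ X) V₁) :=
  stmt4_general V₁ V₂ hstrat r hV₁ hV₂
end

section
/- Let Ω, C be skew-symmetric r×r matrices with ΩC = CΩ, C in the block form given by Lemma on the commuting case (in particular the second row of C is (-c₁₂, 0, 0, ..., 0)), and Ω with first block ((0,1),(-1,0)). If x, y ∈ ℝ^r with y₁ ≠ 0 and (λ₅,λ₆) satisfy λ₅Ωx + λ₆Cx = 0 and λ₅Ωy + λ₆Cy = 0, then λ₅ = 0; hence if (λ₅,λ₆) ≠ (0,0) then x, y ∈ ker C. -/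
open Matrix

/-- The `r × r` skew-symmetric matrix with `k` diagonal blocks `((0,1),(-1,0))` in the
first `2k` positions (0-indexed) and zeros elsewhere. -/
def stdOmega (r k : ℕ) : Matrix (Fin r) (Fin r) ℝ := fun i j =>
  if (i : ℕ) % 2 = 0 ∧ (j : ℕ) = (i : ℕ) + 1 ∧ (j : ℕ) < 2 * k then 1
  else if (j : ℕ) % 2 = 0 ∧ (i : ℕ) = (j : ℕ) + 1 ∧ (i : ℕ) < 2 * k then -1 else 0

/-- Let `Ω` be the standard block matrix and `C` skew-symmetric, commuting with `Ω`, in the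
block-diagonal form of Lemma 4.1 with moreover `c₁₂ = 0` (normalization (4.2) of the paper),
so that the second row of `C` is `(-c₁₂, 0, …, 0) = 0`. If `y₁ ≠ 0` and
`λ₅ Ωx + λ₆ Cx = 0 = λ₅ Ωy + λ₆ Cy`, then `λ₅ = 0`; hence if `(λ₅,λ₆) ≠ (0,0)` then
`x, y ∈ ker C`. -/
theorem stmt10 (r k : ℕ) (hk1 : 1 ≤ k) (hk : 2 * k ≤ r)
    (C : Matrix (Fin r) (Fin r) ℝ) (hC : Cᵀ = -C)
    (hcomm : stdOmega r k * C = C * stdOmega r k)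
    (hrow2 : ∀ j : Fin r, 2 ≤ (j : ℕ) → C ⟨1, by omega⟩ j = 0)
    (hc12 : C ⟨0, by omega⟩ ⟨1, by omega⟩ = 0)
    (x y : Fin r → ℝ) (hy1 : y ⟨0, by omega⟩ ≠ 0)
    (l5 l6 : ℝ)
    (hx : l5 • (stdOmega r k *ᵥ x) + l6 • (C *ᵥ x) = 0)
    (hy : l5 • (stdOmega r k *ᵥ y) + l6 • (C *ᵥ y) = 0) :
    l5 = 0 ∧ (¬(l5 = 0 ∧ l6 = 0) → C *ᵥ x = 0 ∧ C *ᵥ y = 0) := by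
  have hr : 2 ≤ r := by omega
  have hrow1 : (C *ᵥ y) ⟨1, by omega⟩ = 0 := by
    unfold Matrix.mulVec dotProduct
    apply Finset.sum_eq_zero
    intro j _
    dsimp only
    rcases Nat.lt_or_ge (j : ℕ) 2 with hj | hj
    · interval_cases h : (j : ℕ)
      · have h0 : j = ⟨0, by omega⟩ := Fin.ext h
        have h1 : C ⟨0, by omega⟩ ⟨1, by omega⟩ = -C ⟨1, by omega⟩ ⟨0, by omega⟩ := by
          have := congrFun (congrFun hC ⟨1, by omega⟩) ⟨0, by omega⟩
          simpa [Matrix.transpose_apply] using this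
        have hz : C ⟨1, by omega⟩ ⟨0, by omega⟩ = 0 := by
          rw [hc12] at h1; linarith
        rw [h0, hz]; ring
      · have h1 : j = ⟨1, by omega⟩ := Fin.ext h
        have hd : C ⟨1, by omega⟩ ⟨1, by omega⟩ = -C ⟨1, by omega⟩ ⟨1, by omega⟩ := by
          have := congrFun (congrFun hC ⟨1, by omega⟩) ⟨1, by omega⟩
          simpa [Matrix.transpose_apply] using this
        have hz : C ⟨1, by omega⟩ ⟨1, by omega⟩ = 0 := by linarith
        rw [h1, hz]; ring
    · rw [hrow2 j hj]; ring
  have hOmega1 : (stdOmega r k *ᵥ y) ⟨1, by omega⟩ = -y ⟨0, by omega⟩ := by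
    unfold Matrix.mulVec dotProduct stdOmega
    rw [Finset.sum_eq_single (⟨0, by omega⟩ : Fin r)]
    · simp; omega
    · intro j _ hj
      have hj0 : (j : ℕ) ≠ 0 := fun h => hj (Fin.ext h)
      simp only [Fin.val_mk]
      rw [if_neg (by omega), if_neg (by omega)]
      ring
    · intro h; exact absurd (Finset.mem_univ _) h
  have hl5 : l5 = 0 := by
    have := congrFun hy ⟨1, by omega⟩
    simp only [Pi.add_apply, Pi.smul_apply, Pi.zero_apply, smul_eq_mul,
      hrow1, hOmega1] at this
    have : l5 * y ⟨0, by omega⟩ = 0 := by linarith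
    rcases mul_eq_zero.mp this with h | h
    · exact h
    · exact absurd h hy1
  refine ⟨hl5, fun hne => ?_⟩
  have hl6 : l6 ≠ 0 := fun h => hne ⟨hl5, h⟩
  subst hl5
  simp only [zero_smul, zero_add] at hx hy
  constructor
  · funext i
    have := congrFun hx i
    simp only [Pi.smul_apply, Pi.zero_apply, smul_eq_mul] at this
    exact (mul_eq_zero.mp this).resolve_left hl6
  · funext i
    have := congrFun hy i
    simp only [Pi.smul_apply, Pi.zero_apply, smul_eq_mul] at this
    exact (mul_eq_zero.mp this).resolve_left hl6
end

section
/- Let g = V₁ ⊕ V₂ be a step-2 stratified Lie algebra with dim V₁ = 4, dim V₂ = 3, and suppose there is a 2-dimensional subspace P ⊂ V₁ with dim [P,V₁] = 2 and dim [P,P] = 1. Then there exist a basis X₁,X₂,X₃,X₄ of V₁, a basis X₂₁, X₃₁, X₄₃ of V₂, and λ ∈ ℝ such that [X₂,X₁] = X₂₁, [X₃,X₁] = X₃₁, [X₄,X₃] = X₄₃, [X₄,X₂] = λX₃₁, and [X₄,X₁] = [X₃,X₂] = 0. -/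
open Submodule Module

section helpers

variable {L : Type*} [LieRing L] [LieAlgebra ℝ L]

lemma mem_bracketSpan {P Q : Submodule ℝ L} {x y : L} (hx : x ∈ P) (hy : y ∈ Q) :
    ⁅x, y⁆ ∈ bracketSpan P Q :=
  Submodule.subset_span ⟨x, hx, y, hy, rfl⟩

lemma bracketSpan_le {P Q S : Submodule ℝ L} (h : ∀ x ∈ P, ∀ y ∈ Q, ⁅x, y⁆ ∈ S) :
    bracketSpan P Q ≤ S := by
  rw [bracketSpan, Submodule.span_le]
  rintro z ⟨x, hx, y, hy, rfl⟩
  exact h x hx y hy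

lemma bracket_mem_of_span {S : Submodule ℝ L} {s t : Set L} {x y : L}
    (hx : x ∈ Submodule.span ℝ s) (hy : y ∈ Submodule.span ℝ t)
    (h : ∀ a ∈ s, ∀ b ∈ t, ⁅a, b⁆ ∈ S) : ⁅x, y⁆ ∈ S := by
  have key : ∀ a ∈ s, ⁅a, y⁆ ∈ S := by
    intro a ha
    induction hy using Submodule.span_induction with
    | mem b hb => exact h a ha b hb
    | zero => simp
    | add u v _ _ hu hv => rw [lie_add]; exact S.add_mem hu hv
    | smul r u _ hu => rw [lie_smul]; exact S.smul_mem r hu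
  induction hx using Submodule.span_induction with
  | mem a ha => exact key a ha
  | zero => simp
  | add u v _ _ hu hv => rw [add_lie]; exact S.add_mem hu hv
  | smul r u _ hu => rw [smul_lie]; exact S.smul_mem r hu

end helpers

set_option maxHeartbeats 1000000 in
/-- Let `g = V₁ ⊕ V₂` be step-2 stratified with `dim V₁ = 4`, `dim V₂ = 3`, and suppose
`P ⊂ V₁` is 2-dimensional with `dim [P,V₁] = 2` and `dim [P,P] = 1`. Then there are a basis
`X₁,…,X₄` of `V₁`, a basis `X₂₁, X₃₁, X₄₃` of `V₂` and `λ ∈ ℝ` with `[X₂,X₁] = X₂₁`,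
`[X₃,X₁] = X₃₁`, `[X₄,X₃] = X₄₃`, `[X₄,X₂] = λ X₃₁`, `[X₄,X₁] = [X₃,X₂] = 0`. -/
theorem stmt13 {L : Type*} [LieRing L] [LieAlgebra ℝ L] [FiniteDimensional ℝ L]
    (V₁ V₂ : Submodule ℝ L)
    (hsum : V₁ ⊔ V₂ = ⊤) (hinter : V₁ ⊓ V₂ = ⊥)
    (hstrat : bracketSpan V₁ V₁ = V₂)
    (hcentral : ∀ x : L, ∀ z ∈ V₂, ⁅x, z⁆ = 0)
    (hV₁ : Module.finrank ℝ V₁ = 4) (hV₂ : Module.finrank ℝ V₂ = 3)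
    (P : Submodule ℝ L) (hP : P ≤ V₁) (hPdim : Module.finrank ℝ P = 2)
    (hPV₁ : Module.finrank ℝ (bracketSpan P V₁) = 2)
    (hPP : Module.finrank ℝ (bracketSpan P P) = 1) :
    ∃ (X : Fin 4 → L) (Z : Fin 3 → L) (lam : ℝ),
      (∀ i, X i ∈ V₁) ∧ LinearIndependent ℝ X ∧
      Submodule.span ℝ (Set.range X) = V₁ ∧
      (∀ j, Z j ∈ V₂) ∧ LinearIndependent ℝ Z ∧
      Submodule.span ℝ (Set.range Z) = V₂ ∧
      ⁅X 1, X 0⁆ = Z 0 ∧ ⁅X 2, X 0⁆ = Z 1 ∧ ⁅X 3, X 2⁆ = Z 2 ∧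
      ⁅X 3, X 1⁆ = lam • Z 1 ∧ ⁅X 3, X 0⁆ = 0 ∧ ⁅X 2, X 1⁆ = 0 := by
  classical
  -- find a generator of `[P,V₁]` outside `[P,P]`
  obtain ⟨p, hpP, y, hyV, hpy⟩ :
      ∃ p ∈ P, ∃ y ∈ V₁, ⁅p, y⁆ ∉ bracketSpan P P := by
    by_contra hcon
    push_neg at hcon
    have hle : bracketSpan P V₁ ≤ bracketSpan P P :=
      bracketSpan_le fun x hx y hy => hcon x hx y hy
    have := Submodule.finrank_mono hle
    omega
  have hpV : p ∈ V₁ := hP hpP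
  have hp0 : p ≠ 0 := by
    rintro rfl
    exact hpy (by rw [zero_lie]; exact zero_mem _)
  -- complete `p` to a basis `p, q` of `P`
  obtain ⟨q, hqP, hqs⟩ : ∃ q ∈ P, q ∉ Submodule.span ℝ ({p} : Set L) := by
    by_contra hcon
    push_neg at hcon
    have hle : P ≤ Submodule.span ℝ ({p} : Set L) := fun x hx => hcon x hx
    have h1 := Submodule.finrank_mono hle
    have h2 : finrank ℝ (Submodule.span ℝ ({p} : Set L)) ≤ 1 := by
      simpa using finrank_span_le_card ({p} : Set L)
    omega
  have hqV : q ∈ V₁ := hP hqP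
  have hqp_li : LinearIndependent ℝ ![q, p] := by
    rw [linearIndependent_fin2]
    refine ⟨by simpa using hp0, fun a ha => hqs ?_⟩
    simp only [Matrix.cons_val_one, Matrix.head_cons, Matrix.cons_val_zero] at ha
    exact Submodule.mem_span_singleton.2 ⟨a, ha⟩
  have hrange_qp : Set.range ![q, p] = {q, p} := by
    ext u
    simp [Matrix.range_cons, Matrix.range_empty]
    try tauto
  have hPspan : Submodule.span ℝ ({q, p} : Set L) = P := by
    apply Submodule.eq_of_le_of_finrank_le
    · rw [Submodule.span_le]
      rintro z (rfl | rfl)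
      exacts [hqP, hpP]
    · rw [hPdim, ← hrange_qp, finrank_span_eq_card hqp_li]
      simp
  obtain ⟨Z₀, hZ₀⟩ : ∃ z : L, z = ⁅q, p⁆ := ⟨_, rfl⟩
  have t_qp : ⁅q, p⁆ = Z₀ := hZ₀.symm
  have t_pq : ⁅p, q⁆ = -Z₀ := by rw [← lie_skew, t_qp]
  have hPPspan : bracketSpan P P = Submodule.span ℝ ({Z₀} : Set L) := by
    apply le_antisymm
    · apply bracketSpan_le
      intro u hu v hv
      rw [← hPspan] at hu hv
      refine bracket_mem_of_span hu hv ?_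
      rintro x (rfl | rfl) z (rfl | rfl)
      · rw [lie_self]; exact zero_mem _
      · rw [t_qp]; exact Submodule.subset_span rfl
      · rw [t_pq]; exact neg_mem (Submodule.subset_span rfl)
      · rw [lie_self]; exact zero_mem _
    · rw [Submodule.span_le, Set.singleton_subset_iff]
      rw [hZ₀]
      exact mem_bracketSpan hqP hpP
  have hZ₀0 : Z₀ ≠ 0 := by
    rintro rfl
    rw [hPPspan, Submodule.span_zero_singleton, finrank_bot] at hPP
    omega
  obtain ⟨Z₁, hZ₁⟩ : ∃ z : L, z = ⁅y, p⁆ := ⟨_, rfl⟩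
  have t_yp : ⁅y, p⁆ = Z₁ := hZ₁.symm
  have t_py : ⁅p, y⁆ = -Z₁ := by rw [← lie_skew, t_yp]
  have hZ₁s : Z₁ ∉ Submodule.span ℝ ({Z₀} : Set L) := by
    intro h
    exact hpy (by rw [hPPspan, t_py]; exact neg_mem h)
  have hyP : y ∉ P := fun h => hpy (mem_bracketSpan hpP h)
  have hZli : LinearIndependent ℝ ![Z₁, Z₀] := by
    rw [linearIndependent_fin2]
    constructor
    · simpa using hZ₀0
    · intro a ha
      apply hZ₁s
      simp only [Matrix.cons_val_one, Matrix.head_cons, Matrix.cons_val_zero] at ha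
      exact Submodule.mem_span_singleton.2 ⟨a, ha⟩
  have hrange_Z : Set.range ![Z₁, Z₀] = {Z₀, Z₁} := by
    ext u
    simp [Matrix.range_cons, Matrix.range_empty]
    try tauto
  have hWfin : finrank ℝ (Submodule.span ℝ ({Z₀, Z₁} : Set L)) = 2 := by
    rw [← hrange_Z, finrank_span_eq_card hZli]
    simp
  have hW : Submodule.span ℝ ({Z₀, Z₁} : Set L) = bracketSpan P V₁ := by
    apply Submodule.eq_of_le_of_finrank_le
    · rw [Submodule.span_le]
      rintro z (rfl | rfl)
      · rw [hZ₀]; exact mem_bracketSpan hqP hpV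
      · have h1 : ⁅p, y⁆ ∈ bracketSpan P V₁ := mem_bracketSpan hpP hyV
        rw [t_py] at h1
        simpa using neg_mem h1
    · rw [hPV₁, hWfin]
  -- choose `w` completing a basis of `V₁`
  obtain ⟨w, hwV, hws⟩ : ∃ w ∈ V₁, w ∉ Submodule.span ℝ ({y, q, p} : Set L) := by
    by_contra hcon
    push_neg at hcon
    have hle : V₁ ≤ Submodule.span ℝ ({y, q, p} : Set L) := fun x hx => hcon x hx
    have h1 := Submodule.finrank_mono hle
    have h2 : finrank ℝ (Submodule.span ℝ ({y, q, p} : Set L)) ≤ 3 := by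
      refine le_trans (finrank_span_le_card ({y, q, p} : Set L)) ?_
      rw [Set.toFinset_insert, Set.toFinset_insert, Set.toFinset_singleton]
      refine (Finset.card_insert_le _ _).trans
        (Nat.succ_le_succ ((Finset.card_insert_le _ _).trans (by simp)))
    omega
  have hwy_li : LinearIndependent ℝ ![w, y, q, p] := by
    have htail : Fin.tail ![w, y, q, p] = ![y, q, p] := by
      funext i; fin_cases i <;> rfl
    have htail2 : Fin.tail ![y, q, p] = ![q, p] := by
      funext i; fin_cases i <;> rfl
    rw [linearIndependent_fin_succ, htail]
    constructor
    · rw [linearIndependent_fin_succ, htail2]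
      refine ⟨hqp_li, ?_⟩
      rw [hrange_qp]
      simpa [hPspan] using hyP
    · have hr : Set.range ![y, q, p] = {y, q, p} := by
        ext u
        simp [Matrix.range_cons, Matrix.range_empty]
        try tauto
      rw [hr]
      simpa using hws
  have hrange4 : Set.range ![w, y, q, p] = {w, y, q, p} := by
    ext u
    simp [Matrix.range_cons, Matrix.range_empty]
    try tauto
  have hV₁span : Submodule.span ℝ ({w, y, q, p} : Set L) = V₁ := by
    apply Submodule.eq_of_le_of_finrank_le
    · rw [Submodule.span_le]
      rintro z (rfl | rfl | rfl | rfl)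
      exacts [hwV, hyV, hqV, hpV]
    · rw [hV₁, ← hrange4, finrank_span_eq_card hwy_li]
      simp
  -- decompositions in `[P,V₁] = span {Z₀, Z₁}`
  have hyq_mem : ⁅y, q⁆ ∈ Submodule.span ℝ ({Z₀, Z₁} : Set L) := by
    rw [hW, ← lie_skew]
    exact neg_mem (mem_bracketSpan hqP hyV)
  obtain ⟨a, b, hab⟩ := Submodule.mem_span_pair.1 hyq_mem
  have t_yq : ⁅y, q⁆ = a • Z₀ + b • Z₁ := hab.symm
  have t_qy : ⁅q, y⁆ = -(a • Z₀ + b • Z₁) := by rw [← lie_skew, t_yq]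
  have hwp_mem : ⁅w, p⁆ ∈ Submodule.span ℝ ({Z₀, Z₁} : Set L) := by
    rw [hW, ← lie_skew]
    exact neg_mem (mem_bracketSpan hpP hwV)
  obtain ⟨c, d, hcd⟩ := Submodule.mem_span_pair.1 hwp_mem
  have t_wp : ⁅w, p⁆ = c • Z₀ + d • Z₁ := hcd.symm
  have t_pw : ⁅p, w⁆ = -(c • Z₀ + d • Z₁) := by rw [← lie_skew, t_wp]
  have hwq_mem : ⁅w, q⁆ ∈ Submodule.span ℝ ({Z₀, Z₁} : Set L) := by
    rw [hW, ← lie_skew]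
    exact neg_mem (mem_bracketSpan hqP hwV)
  obtain ⟨e, f, hef⟩ := Submodule.mem_span_pair.1 hwq_mem
  have t_wq : ⁅w, q⁆ = e • Z₀ + f • Z₁ := hef.symm
  have t_qw : ⁅q, w⁆ = -(e • Z₀ + f • Z₁) := by rw [← lie_skew, t_wq]
  obtain ⟨Zr, hZr⟩ : ∃ z : L, z = ⁅w, y⁆ := ⟨_, rfl⟩
  have t_wy : ⁅w, y⁆ = Zr := hZr.symm
  have t_yw : ⁅y, w⁆ = -Zr := by rw [← lie_skew, t_wy]
  -- the new basis vectors
  obtain ⟨X₃, hX₃⟩ : ∃ x : L, x = y + a • p := ⟨_, rfl⟩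
  obtain ⟨X₂, hX₂⟩ : ∃ x : L, x = q - b • p := ⟨_, rfl⟩
  obtain ⟨X₄, hX₄⟩ : ∃ x : L, x = w - d • X₃ - c • X₂ + (e - b * c) • p := ⟨_, rfl⟩
  obtain ⟨Z₂, hZ₂⟩ : ∃ z : L, z = ⁅X₄, X₃⁆ := ⟨_, rfl⟩
  have hX₃V : X₃ ∈ V₁ := by rw [hX₃]; exact add_mem hyV (smul_mem _ _ hpV)
  have hX₂V : X₂ ∈ V₁ := by rw [hX₂]; exact sub_mem hqV (smul_mem _ _ hpV)
  have hX₄V : X₄ ∈ V₁ := by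
    rw [hX₄]
    exact add_mem (sub_mem (sub_mem hwV (smul_mem _ _ hX₃V)) (smul_mem _ _ hX₂V))
      (smul_mem _ _ hpV)
  -- bracket computations
  have h2p : ⁅X₂, p⁆ = Z₀ := by
    rw [hX₂]
    simp only [sub_lie, smul_lie, t_qp, lie_self, smul_zero, sub_zero]
  have h3p : ⁅X₃, p⁆ = Z₁ := by
    rw [hX₃]
    simp only [add_lie, smul_lie, t_yp, lie_self, smul_zero, add_zero]
  have h32 : ⁅X₃, X₂⁆ = 0 := by
    rw [hX₃, hX₂]
    simp only [lie_sub, lie_add, add_lie, lie_smul, smul_lie, t_yq, t_yp, t_pq, lie_self,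
      smul_zero]
    module
  have h23 : ⁅X₂, X₃⁆ = 0 := by rw [← lie_skew, h32, neg_zero]
  have h4p : ⁅X₄, p⁆ = 0 := by
    rw [hX₄]
    simp only [add_lie, sub_lie, smul_lie, t_wp, h3p, h2p, lie_self, smul_zero]
    module
  have h42 : ⁅X₄, X₂⁆ = (f - b * d) • Z₁ := by
    rw [hX₄]
    simp only [add_lie, sub_lie, smul_lie, h32, lie_self, smul_zero]
    rw [hX₂]
    simp only [lie_sub, lie_smul, t_wq, t_wp, t_pq, lie_self, smul_zero]
    module
  have h43 : ⁅X₄, X₃⁆ = Z₂ := hZ₂.symm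
  have hZ₂eq : Z₂ = Zr + (a * c) • Z₀ + (a * d - e + b * c) • Z₁ := by
    rw [hZ₂, hX₄]
    simp only [add_lie, sub_lie, smul_lie, h23, lie_self, smul_zero]
    rw [hX₃]
    simp only [lie_add, lie_smul, add_lie, smul_lie, t_wy, t_wp, t_py, t_yp, lie_self,
      smul_zero]
    module
  -- `V₂ ≤ span {Z₀, Z₁, Zr}`
  have hZ₀m3 : Z₀ ∈ Submodule.span ℝ ({Z₀, Z₁, Zr} : Set L) := subset_span (by simp)
  have hZ₁m3 : Z₁ ∈ Submodule.span ℝ ({Z₀, Z₁, Zr} : Set L) := subset_span (by simp)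
  have hZrm3 : Zr ∈ Submodule.span ℝ ({Z₀, Z₁, Zr} : Set L) := subset_span (by simp)
  have hV₂le : V₂ ≤ Submodule.span ℝ ({Z₀, Z₁, Zr} : Set L) := by
    rw [← hstrat]
    apply bracketSpan_le
    intro u hu v hv
    rw [← hV₁span] at hu hv
    refine bracket_mem_of_span hu hv ?_
    rintro x (rfl | rfl | rfl | rfl) z (rfl | rfl | rfl | rfl) <;>
      simp only [lie_self, t_wy, t_yw, t_wq, t_qw, t_wp, t_pw, t_yq, t_qy, t_yp, t_py, t_qp,
        t_pq] <;>
      first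
        | exact zero_mem _
        | exact hZ₀m3
        | exact hZ₁m3
        | exact hZrm3
        | exact neg_mem hZ₀m3
        | exact neg_mem hZ₁m3
        | exact neg_mem hZrm3
        | exact add_mem (smul_mem _ _ hZ₀m3) (smul_mem _ _ hZ₁m3)
        | exact neg_mem (add_mem (smul_mem _ _ hZ₀m3) (smul_mem _ _ hZ₁m3))
  have hZrs : Zr ∉ Submodule.span ℝ ({Z₀, Z₁} : Set L) := by
    intro h
    have hle : Submodule.span ℝ ({Z₀, Z₁, Zr} : Set L) ≤
        Submodule.span ℝ ({Z₀, Z₁} : Set L) := by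
      rw [Submodule.span_le]
      rintro z (rfl | rfl | rfl)
      · exact subset_span (by simp)
      · exact subset_span (by simp)
      · exact h
    have h1 := Submodule.finrank_mono (hV₂le.trans hle)
    rw [hV₂, hWfin] at h1
    omega
  have hZ₂s : Z₂ ∉ Submodule.span ℝ ({Z₀, Z₁} : Set L) := by
    intro h
    apply hZrs
    have hzr : Zr = Z₂ - ((a * c) • Z₀ + (a * d - e + b * c) • Z₁) := by
      rw [hZ₂eq]; module
    rw [hzr]
    exact sub_mem h (add_mem (smul_mem _ _ (subset_span (by simp)))
      (smul_mem _ _ (subset_span (by simp))))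
  have hZ₀V : Z₀ ∈ V₂ := by rw [← hstrat, hZ₀]; exact mem_bracketSpan hqV hpV
  have hZ₁V : Z₁ ∈ V₂ := by rw [← hstrat, hZ₁]; exact mem_bracketSpan hyV hpV
  have hZ₂V : Z₂ ∈ V₂ := by rw [← hstrat, hZ₂]; exact mem_bracketSpan hX₄V hX₃V
  have hZspan : Submodule.span ℝ ({Z₀, Z₁, Z₂} : Set L) = V₂ := by
    apply le_antisymm
    · rw [Submodule.span_le]
      rintro z (rfl | rfl | rfl)
      exacts [hZ₀V, hZ₁V, hZ₂V]
    · refine hV₂le.trans ?_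
      have hZrmem : Zr ∈ Submodule.span ℝ ({Z₀, Z₁, Z₂} : Set L) := by
        have hzr : Zr = Z₂ - (a * c) • Z₀ - (a * d - e + b * c) • Z₁ := by
          rw [hZ₂eq]; module
        rw [hzr]
        exact sub_mem (sub_mem (subset_span (by simp)) (smul_mem _ _ (subset_span (by simp))))
          (smul_mem _ _ (subset_span (by simp)))
      rw [Submodule.span_le]
      rintro u (rfl | rfl | rfl)
      exacts [subset_span (by simp), subset_span (by simp), hZrmem]
  have hXspan : Submodule.span ℝ ({p, X₂, X₃, X₄} : Set L) = V₁ := by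
    apply le_antisymm
    · rw [Submodule.span_le]
      rintro z (rfl | rfl | rfl | rfl)
      exacts [hpV, hX₂V, hX₃V, hX₄V]
    · rw [← hV₁span, Submodule.span_le]
      have hpm : p ∈ Submodule.span ℝ ({p, X₂, X₃, X₄} : Set L) := subset_span (by simp)
      have hX₂m : X₂ ∈ Submodule.span ℝ ({p, X₂, X₃, X₄} : Set L) := subset_span (by simp)
      have hX₃m : X₃ ∈ Submodule.span ℝ ({p, X₂, X₃, X₄} : Set L) := subset_span (by simp)
      have hX₄m : X₄ ∈ Submodule.span ℝ ({p, X₂, X₃, X₄} : Set L) := subset_span (by simp)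
      have hqm : q ∈ Submodule.span ℝ ({p, X₂, X₃, X₄} : Set L) := by
        have hq' : q = X₂ + b • p := by rw [hX₂]; module
        rw [hq']
        exact add_mem hX₂m (smul_mem _ _ hpm)
      have hym : y ∈ Submodule.span ℝ ({p, X₂, X₃, X₄} : Set L) := by
        have hy' : y = X₃ - a • p := by rw [hX₃]; module
        rw [hy']
        exact sub_mem hX₃m (smul_mem _ _ hpm)
      have hwm : w ∈ Submodule.span ℝ ({p, X₂, X₃, X₄} : Set L) := by
        have hw' : w = X₄ + d • X₃ + c • X₂ - (e - b * c) • p := by rw [hX₄]; module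
        rw [hw']
        exact sub_mem (add_mem (add_mem hX₄m (smul_mem _ _ hX₃m)) (smul_mem _ _ hX₂m))
          (smul_mem _ _ hpm)
      rintro z (rfl | rfl | rfl | rfl)
      exacts [hwm, hym, hqm, hpm]
  -- the final tuples
  have hrangeX : Set.range ![p, X₂, X₃, X₄] = {p, X₂, X₃, X₄} := by
    ext u
    simp [Matrix.range_cons, Matrix.range_empty]
    try tauto
  have hrangeZ : Set.range ![Z₀, Z₁, Z₂] = {Z₀, Z₁, Z₂} := by
    ext u
    simp [Matrix.range_cons, Matrix.range_empty]
    try tauto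
  refine ⟨![p, X₂, X₃, X₄], ![Z₀, Z₁, Z₂], f - b * d, ?_, ?_, ?_, ?_, ?_, ?_, ?_, ?_, ?_,
    ?_, ?_, ?_⟩
  · intro i
    fin_cases i <;>
      simp only [Matrix.cons_val_zero, Matrix.cons_val_one, Matrix.head_cons,
        Matrix.cons_val_two, Matrix.tail_cons, Matrix.cons_val_three, Fin.isValue] <;>
      assumption
  · rw [linearIndependent_iff_card_eq_finrank_span]
    show Fintype.card (Fin 4) = finrank ℝ (Submodule.span ℝ (Set.range ![p, X₂, X₃, X₄]))
    rw [hrangeX, hXspan, hV₁]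
    simp
  · rw [hrangeX, hXspan]
  · intro j
    fin_cases j <;>
      simp only [Matrix.cons_val_zero, Matrix.cons_val_one, Matrix.head_cons,
        Matrix.cons_val_two, Matrix.tail_cons, Fin.isValue] <;>
      assumption
  · rw [linearIndependent_iff_card_eq_finrank_span]
    show Fintype.card (Fin 3) = finrank ℝ (Submodule.span ℝ (Set.range ![Z₀, Z₁, Z₂]))
    rw [hrangeZ, hZspan, hV₂]
    simp
  · rw [hrangeZ, hZspan]
  · exact h2p
  · exact h3p
  · exact h43
  · exact h42
  · exact h4p
  · exact h32
end

section
/- Let g = V₁ ⊕ V₂ be the 7-dimensional step-2 stratified Lie algebra with basis X₁,...,X₄ of V₁ and X₂₁, X₃₁, X₄₃ of V₂, brackets [X₂,X₁] = X₂₁, [X₃,X₁] = X₃₁, [X₄,X₃] = X₄₃, [X₄,X₂] = λX₃₁, [X₄,X₁] = [X₃,X₂] = 0 for a fixed λ ∈ ℝ. For X = x₁X₁ + x₂X₂ + x₃X₃ + x₄X₄ ∈ V₁ nonzero, dim [X,V₁] ≤ 2 holds if and only if x₁x₃ + λx₂x₄ = 0. -/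
/-- In the 7-dimensional step-2 stratified Lie algebra with basis `X₁,…,X₄` of `V₁`,
`X₂₁, X₃₁, X₄₃` of `V₂` and brackets `[X₂,X₁] = X₂₁`, `[X₃,X₁] = X₃₁`, `[X₄,X₃] = X₄₃`,
`[X₄,X₂] = λ X₃₁`, `[X₄,X₁] = [X₃,X₂] = 0`: a nonzero `X = Σ xᵢ Xᵢ ∈ V₁` satisfies
`dim [X, V₁] ≤ 2` if and only if `x₁ x₃ + λ x₂ x₄ = 0`. -/
theorem stmt14 {L : Type*} [LieRing L] [LieAlgebra ℝ L] [FiniteDimensional ℝ L]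
    (X : Fin 4 → L) (Z : Fin 3 → L) (lam : ℝ)
    (hX : LinearIndependent ℝ X) (hZ : LinearIndependent ℝ Z)
    (h21 : ⁅X 1, X 0⁆ = Z 0) (h31 : ⁅X 2, X 0⁆ = Z 1) (h43 : ⁅X 3, X 2⁆ = Z 2)
    (h42 : ⁅X 3, X 1⁆ = lam • Z 1) (h41 : ⁅X 3, X 0⁆ = 0) (h32 : ⁅X 2, X 1⁆ = 0)
    (hcentral : ∀ i j, ⁅X i, Z j⁆ = 0)
    (x : Fin 4 → ℝ) (hx : x ≠ 0) :
    Module.finrank ℝ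
        (bracketSpan (ℝ ∙ (∑ i, x i • X i)) (Submodule.span ℝ (Set.range X))) ≤ 2
      ↔ x 0 * x 2 + lam * (x 1 * x 3) = 0 := by
  classical
  set v : L := ∑ i, x i • X i with hv
  set w : Fin 4 → L := fun j => ⁅v, X j⁆ with hwdef
  have h01 : ⁅X 0, X 1⁆ = -Z 0 := by rw [← lie_skew, h21]
  have h02 : ⁅X 0, X 2⁆ = -Z 1 := by rw [← lie_skew, h31]
  have h03 : ⁅X 0, X 3⁆ = 0 := by rw [← lie_skew, h41, neg_zero]
  have h12 : ⁅X 1, X 2⁆ = 0 := by rw [← lie_skew, h32, neg_zero]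
  have h13 : ⁅X 1, X 3⁆ = -(lam • Z 1) := by rw [← lie_skew, h42]
  have h23 : ⁅X 2, X 3⁆ = -Z 2 := by rw [← lie_skew, h43]
  have e0 : w 0 = x 1 • Z 0 + x 2 • Z 1 := by
    simp only [hwdef, hv, Fin.sum_univ_four, add_lie, smul_lie, lie_self, h21, h31, h41]
    module
  have e1 : w 1 = (-(x 0)) • Z 0 + (lam * x 3) • Z 1 := by
    simp only [hwdef, hv, Fin.sum_univ_four, add_lie, smul_lie, lie_self, h01, h32, h42]
    module
  have e2 : w 2 = (-(x 0)) • Z 1 + x 3 • Z 2 := by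
    simp only [hwdef, hv, Fin.sum_univ_four, add_lie, smul_lie, lie_self, h02, h12, h43]
    module
  have e3 : w 3 = (-(lam * x 1)) • Z 1 + (-(x 2)) • Z 2 := by
    simp only [hwdef, hv, Fin.sum_univ_four, add_lie, smul_lie, lie_self, h03, h13, h23]
    module
  have key : bracketSpan (ℝ ∙ v) (Submodule.span ℝ (Set.range X))
      = Submodule.span ℝ (Set.range w) := by
    apply le_antisymm
    · rw [bracketSpan, Submodule.span_le]
      rintro z ⟨a, ha, b, hb, rfl⟩
      obtain ⟨c, rfl⟩ := Submodule.mem_span_singleton.1 ha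
      obtain ⟨d, rfl⟩ := (Submodule.mem_span_range_iff_exists_fun ℝ).1 hb
      have hb' : ⁅c • v, ∑ j, d j • X j⁆
          = c • (d 0 • w 0 + d 1 • w 1 + d 2 • w 2 + d 3 • w 3) := by
        simp only [hwdef, Fin.sum_univ_four, lie_add, lie_smul, smul_lie]
        module
      rw [hb']
      have hm : ∀ j : Fin 4, w j ∈ Submodule.span ℝ (Set.range w) := fun j =>
        Submodule.subset_span ⟨j, rfl⟩
      exact Submodule.smul_mem _ _ (add_mem (add_mem (add_mem
        (Submodule.smul_mem _ _ (hm 0)) (Submodule.smul_mem _ _ (hm 1)))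
        (Submodule.smul_mem _ _ (hm 2))) (Submodule.smul_mem _ _ (hm 3)))
    · rw [Submodule.span_le]
      rintro _ ⟨j, rfl⟩
      exact Submodule.subset_span
        ⟨v, Submodule.mem_span_singleton_self v, X j, Submodule.subset_span ⟨j, rfl⟩, rfl⟩
  rw [key]
  have bound : ∀ u1 u2 : L,
      Submodule.span ℝ (Set.range w) ≤ Submodule.span ℝ ({u1, u2} : Set L) →
      Module.finrank ℝ (Submodule.span ℝ (Set.range w)) ≤ 2 := by
    intro u1 u2 hle
    refine le_trans (Submodule.finrank_mono hle) ?_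
    have h : ({u1, u2} : Set L) = Set.range ![u1, u2] := by
      simp [Matrix.range_cons, Matrix.range_empty, Set.pair_comm]
    rw [h]
    have := finrank_range_le_card (R := ℝ) ![u1, u2]
    rw [Set.finrank] at this
    simpa using this
  constructor
  · -- finrank ≤ 2 → S = 0
    intro hrk
    by_contra hS
    have hZ1 : Z 1 ∈ Submodule.span ℝ (Set.range w) := by
      have h : x 2 • w 2 + x 3 • w 3 = (-(x 0 * x 2 + lam * (x 1 * x 3))) • Z 1 := by
        rw [e2, e3]; module
      have h' : Z 1 = (-(x 0 * x 2 + lam * (x 1 * x 3)))⁻¹ • (x 2 • w 2 + x 3 • w 3) := by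
        rw [h, smul_smul, inv_mul_cancel₀ (neg_ne_zero.2 hS), one_smul]
      rw [h']
      exact Submodule.smul_mem _ _ (add_mem
        (Submodule.smul_mem _ _ (Submodule.subset_span ⟨2, rfl⟩))
        (Submodule.smul_mem _ _ (Submodule.subset_span ⟨3, rfl⟩)))
    have hZ0 : Z 0 ∈ Submodule.span ℝ (Set.range w) := by
      rcases eq_or_ne (x 0) 0 with h0 | h0
      · have hx1 : x 1 ≠ 0 := fun h1 => hS (by rw [h0, h1]; ring)
        have h : w 0 - x 2 • Z 1 = x 1 • Z 0 := by rw [e0]; module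
        have h' : Z 0 = (x 1)⁻¹ • (w 0 - x 2 • Z 1) := by
          rw [h, smul_smul, inv_mul_cancel₀ hx1, one_smul]
        rw [h']
        exact Submodule.smul_mem _ _ (sub_mem (Submodule.subset_span ⟨0, rfl⟩)
          (Submodule.smul_mem _ _ hZ1))
      · have h : (lam * x 3) • Z 1 - w 1 = x 0 • Z 0 := by rw [e1]; module
        have h' : Z 0 = (x 0)⁻¹ • ((lam * x 3) • Z 1 - w 1) := by
          rw [h, smul_smul, inv_mul_cancel₀ h0, one_smul]
        rw [h']
        exact Submodule.smul_mem _ _ (sub_mem (Submodule.smul_mem _ _ hZ1)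
          (Submodule.subset_span ⟨1, rfl⟩))
    have hZ2 : Z 2 ∈ Submodule.span ℝ (Set.range w) := by
      rcases eq_or_ne (x 2) 0 with h2 | h2
      · have hx3 : x 3 ≠ 0 := fun h3 => hS (by rw [h2, h3]; ring)
        have h : w 2 + x 0 • Z 1 = x 3 • Z 2 := by rw [e2]; module
        have h' : Z 2 = (x 3)⁻¹ • (w 2 + x 0 • Z 1) := by
          rw [h, smul_smul, inv_mul_cancel₀ hx3, one_smul]
        rw [h']
        exact Submodule.smul_mem _ _ (add_mem (Submodule.subset_span ⟨2, rfl⟩)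
          (Submodule.smul_mem _ _ hZ1))
      · have h : -(w 3 + (lam * x 1) • Z 1) = x 2 • Z 2 := by rw [e3]; module
        have h' : Z 2 = (x 2)⁻¹ • (-(w 3 + (lam * x 1) • Z 1)) := by
          rw [h, smul_smul, inv_mul_cancel₀ h2, one_smul]
        rw [h']
        exact Submodule.smul_mem _ _ (neg_mem (add_mem (Submodule.subset_span ⟨3, rfl⟩)
          (Submodule.smul_mem _ _ hZ1)))
    have hle : Submodule.span ℝ (Set.range Z) ≤ Submodule.span ℝ (Set.range w) := by
      rw [Submodule.span_le]
      rintro _ ⟨i, rfl⟩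
      fin_cases i
      · exact hZ0
      · exact hZ1
      · exact hZ2
    have h3 : 3 ≤ Module.finrank ℝ (Submodule.span ℝ (Set.range w)) := by
      have := Submodule.finrank_mono (R := ℝ) hle
      rw [finrank_span_eq_card hZ] at this
      simpa using this
    omega
  · -- S = 0 → finrank ≤ 2
    intro hS
    rcases eq_or_ne (x 0) 0 with h0 | h0
    · -- x 0 = 0
      have hS' : lam * (x 1 * x 3) = 0 := by rw [h0] at hS; linarith
      rcases eq_or_ne lam 0 with hl | hl
      · apply bound (w 0) (Z 2)
        rw [Submodule.span_le]
        rintro _ ⟨j, rfl⟩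
        fin_cases j
        · exact Submodule.subset_span (Set.mem_insert _ _)
        · exact Submodule.mem_span_pair.2 ⟨0, 0, by show _ = w 1; rw [e1, h0, hl]; module⟩
        · exact Submodule.mem_span_pair.2 ⟨0, x 3, by show _ = w 2; rw [e2, h0]; module⟩
        · exact Submodule.mem_span_pair.2 ⟨0, -(x 2), by show _ = w 3; rw [e3, hl]; module⟩
      · rcases eq_or_ne (x 1) 0 with h1 | h1
        · apply bound (Z 1) (Z 2)
          rw [Submodule.span_le]
          rintro _ ⟨j, rfl⟩
          fin_cases j
          · exact Submodule.mem_span_pair.2 ⟨x 2, 0, by show _ = w 0; rw [e0, h1]; module⟩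
          · exact Submodule.mem_span_pair.2 ⟨lam * x 3, 0, by show _ = w 1; rw [e1, h0]; module⟩
          · exact Submodule.mem_span_pair.2 ⟨0, x 3, by show _ = w 2; rw [e2, h0]; module⟩
          · exact Submodule.mem_span_pair.2 ⟨-(lam * x 1), -(x 2), by show _ = w 3; rw [e3]⟩
        · have h3 : x 3 = 0 := by
            rcases mul_eq_zero.1 hS' with h | h
            · exact absurd h hl
            · rcases mul_eq_zero.1 h with h' | h'
              · exact absurd h' h1
              · exact h'
          apply bound (w 0) (w 3)
          rw [Submodule.span_le]
          rintro _ ⟨j, rfl⟩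
          fin_cases j
          · exact Submodule.subset_span (Set.mem_insert _ _)
          · exact Submodule.mem_span_pair.2 ⟨0, 0, by show _ = w 1; rw [e1, h0, h3]; module⟩
          · exact Submodule.mem_span_pair.2 ⟨0, 0, by show _ = w 2; rw [e2, h0, h3]; module⟩
          · exact Submodule.subset_span (Set.mem_insert_of_mem _ rfl)
    · -- x 0 ≠ 0
      apply bound (w 1) (w 2)
      rw [Submodule.span_le]
      rintro _ ⟨j, rfl⟩
      fin_cases j
      · refine Submodule.mem_span_pair.2 ⟨-(x 1) / x 0, 0, ?_⟩
        show _ = w 0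
        rw [e0, e1]
        match_scalars <;> field_simp
        linear_combination -hS
      · exact Submodule.subset_span (Set.mem_insert _ _)
      · exact Submodule.subset_span (Set.mem_insert_of_mem _ rfl)
      · refine Submodule.mem_span_pair.2 ⟨0, lam * x 1 / x 0, ?_⟩
        show _ = w 3
        rw [e2, e3]
        match_scalars <;> field_simp
        linear_combination hS
end

section
/- Fix Ω, C skew-symmetric r×r matrices with ΩC ≠ CΩ. Define F : ℝ^r × ℝ^r → ℝ⁶ by F(x,y) = (‖x‖², ‖y‖², x·y, x₁, x·Ωy, x·Cy). At every point (x,y) with ‖x‖ = ‖y‖ = 1, x₁ = 0, y₁ ≠ 0, x·y = 0, x·Ωy = x·Cy = 0, and y·(ΩC - CΩ)x ≠ 0, the differential of F has rank 6. -/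
/-!
The rank of `dF` is 6 exactly when its six components are linearly independent functionals.
Test a vanishing combination of them on `(x, 0)`, `(0, y)`, `(0, x)` and `(y, 0)`: orthonormality
of `x, y`, the constraints `x·Ωy = x·Cy = 0` and skew-symmetry (`u·Au = 0`) kill the first three
coefficients, and `y₁ ≠ 0` the fourth. On `(Cx, Cy)` and `(Ωx, Ωy)` skew-symmetry leaves
only the fifth, resp. sixth, coefficient times `±(Ωx·Cy - Cx·Ωy) = ±y·(ΩC - CΩ)x ≠ 0`.
-/

open Matrix

section Calculus

variable {𝕜 E ι : Type*} [NontriviallyNormedField 𝕜] [NormedAddCommGroup E] [NormedSpace 𝕜 E]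
  [Fintype ι] {f g : E → ι → 𝕜} {p : E}

@[fun_prop]
theorem DifferentiableAt.dotProduct (hf : DifferentiableAt 𝕜 f p) (hg : DifferentiableAt 𝕜 g p) :
    DifferentiableAt 𝕜 (fun q => f q ⬝ᵥ g q) p := by
  unfold _root_.dotProduct
  fun_prop

theorem fderiv_dotProduct_apply (hf : DifferentiableAt 𝕜 f p) (hg : DifferentiableAt 𝕜 g p)
    (u : E) :
    fderiv 𝕜 (fun q => f q ⬝ᵥ g q) p u = fderiv 𝕜 f p u ⬝ᵥ g p + f p ⬝ᵥ fderiv 𝕜 g p u := by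
  have hfi i := hasFDerivAt_pi'.1 hf.hasFDerivAt i
  have hgi i := hasFDerivAt_pi'.1 hg.hasFDerivAt i
  unfold dotProduct
  rw [(HasFDerivAt.fun_sum fun i _ => (hfi i).fun_mul (hgi i)).fderiv]
  simp [Finset.sum_add_distrib, mul_comm, add_comm]

theorem HasFDerivAt.const_mulVec [CompleteSpace 𝕜] {f' : E →L[𝕜] ι → 𝕜}
    (hf : HasFDerivAt f f' p) (A : Matrix ι ι 𝕜) :
    HasFDerivAt (fun q => A *ᵥ f q) ((LinearMap.toContinuousLinearMap A.mulVecLin).comp f') p :=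
  (LinearMap.toContinuousLinearMap A.mulVecLin).hasFDerivAt.comp p hf

end Calculus

theorem LinearMap.rank_eq_card_of_linearIndependent_apply {K V ι : Type*} [Field K]
    [AddCommGroup V] [Module K V] [Fintype ι] (L : V →ₗ[K] ι → K)
    (hL : LinearIndependent K fun i v => L v i) :
    L.rank = Fintype.card ι := by
  have hrange : LinearMap.range L = ⊤ := by
    rw [← span_flip_eq_top_iff_linearIndependent] at hL
    rwa [← Submodule.span_eq (LinearMap.range L), LinearMap.coe_range]
  rw [LinearMap.rank, hrange, rank_top, rank_fun']

section SkewSymmetric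

variable {R ι : Type*} [CommRing R] [Fintype ι] {A : Matrix ι ι R}

theorem Matrix.dotProduct_mulVec_eq_neg_of_transpose_eq_neg (hA : Aᵀ = -A) (u v : ι → R) :
    u ⬝ᵥ (A *ᵥ v) = -(v ⬝ᵥ (A *ᵥ u)) := by
  rw [dotProduct_mulVec, ← mulVec_transpose, hA, neg_mulVec, neg_dotProduct, dotProduct_comm]

theorem Matrix.dotProduct_mulVec_self_of_transpose_eq_neg [IsAddTorsionFree R] (hA : Aᵀ = -A)
    (u : ι → R) : u ⬝ᵥ (A *ᵥ u) = 0 :=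
  self_eq_neg.1 (dotProduct_mulVec_eq_neg_of_transpose_eq_neg hA u u)

end SkewSymmetric

section ConstraintMap

variable {ι : Type*} [Fintype ι]

def constraintMap (Ω C : Matrix ι ι ℝ) (i₀ : ι) (p : (ι → ℝ) × (ι → ℝ)) : Fin 6 → ℝ :=
  ![p.1 ⬝ᵥ p.1, p.2 ⬝ᵥ p.2, p.1 ⬝ᵥ p.2, p.1 i₀, p.1 ⬝ᵥ (Ω *ᵥ p.2), p.1 ⬝ᵥ (C *ᵥ p.2)]

theorem fderiv_constraintMap_apply (Ω C : Matrix ι ι ℝ) (i₀ : ι) (p w : (ι → ℝ) × (ι → ℝ)) :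
    fderiv ℝ (constraintMap Ω C i₀) p w =
      ![w.1 ⬝ᵥ p.1 + p.1 ⬝ᵥ w.1, w.2 ⬝ᵥ p.2 + p.2 ⬝ᵥ w.2, w.1 ⬝ᵥ p.2 + p.1 ⬝ᵥ w.2, w.1 i₀,
        w.1 ⬝ᵥ (Ω *ᵥ p.2) + p.1 ⬝ᵥ (Ω *ᵥ w.2), w.1 ⬝ᵥ (C *ᵥ p.2) + p.1 ⬝ᵥ (C *ᵥ w.2)] := by
  have hΩ := hasFDerivAt_snd.const_mulVec (p := p) Ω
  have hC := hasFDerivAt_snd.const_mulVec (p := p) C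
  have hcoord : HasFDerivAt (fun q : (ι → ℝ) × (ι → ℝ) => q.1 i₀)
      ((ContinuousLinearMap.proj i₀).comp (ContinuousLinearMap.fst ℝ (ι → ℝ) (ι → ℝ))) p := by
    fun_prop
  have hΩ' := hΩ.differentiableAt
  have hC' := hC.differentiableAt
  have hcomp : ∀ i, DifferentiableAt ℝ (fun q => constraintMap Ω C i₀ q i) p := by
    intro i
    fin_cases i <;> simp [constraintMap] <;> fun_prop
  rw [fderiv_pi hcomp]
  ext i
  fin_cases i <;> simp [constraintMap, fderiv_dotProduct_apply, hΩ', hC', hΩ.fderiv, hC.fderiv,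
    hcoord.fderiv, fderiv_fst, fderiv_snd]

theorem linearIndependent_fderiv_constraintMap {Ω C : Matrix ι ι ℝ} (hΩ : Ωᵀ = -Ω) (hC : Cᵀ = -C)
    {i₀ : ι} {x y : ι → ℝ} (hx : x ⬝ᵥ x = 1) (hy : y ⬝ᵥ y = 1) (hxy : x ⬝ᵥ y = 0)
    (hx₀ : x i₀ = 0) (hy₀ : y i₀ ≠ 0) (hxΩy : x ⬝ᵥ (Ω *ᵥ y) = 0) (hxCy : x ⬝ᵥ (C *ᵥ y) = 0)
    (hne : y ⬝ᵥ ((Ω * C - C * Ω) *ᵥ x) ≠ 0) :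
    LinearIndependent ℝ fun i w => fderiv ℝ (constraintMap Ω C i₀) (x, y) w i := by
  rw [Fintype.linearIndependent_iff]
  intro g hg
  have ev : ∀ u v, g 0 * (u ⬝ᵥ x + x ⬝ᵥ u) + g 1 * (v ⬝ᵥ y + y ⬝ᵥ v) + g 2 * (u ⬝ᵥ y + x ⬝ᵥ v)
      + g 3 * u i₀ + g 4 * (u ⬝ᵥ (Ω *ᵥ y) + x ⬝ᵥ (Ω *ᵥ v))
      + g 5 * (u ⬝ᵥ (C *ᵥ y) + x ⬝ᵥ (C *ᵥ v)) = 0 := fun u v => by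
    simpa [Fin.sum_univ_six, fderiv_constraintMap_apply] using congrFun hg (u, v)
  have skewΩ := dotProduct_mulVec_eq_neg_of_transpose_eq_neg hΩ
  have skewC := dotProduct_mulVec_eq_neg_of_transpose_eq_neg hC
  have h₀ : g 0 = 0 := by simpa [hx, hxy, hx₀, hxΩy, hxCy] using ev x 0
  have h₁ : g 1 = 0 := by simpa [hy, hxy, hxΩy, hxCy] using ev 0 y
  have h₂ : g 2 = 0 := by
    simpa [hx, hxy, dotProduct_comm y x, dotProduct_mulVec_self_of_transpose_eq_neg, hΩ, hC]
      using ev 0 x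
  have h₃ : g 3 = 0 := by
    simpa [h₂, hy₀, hxy, dotProduct_comm y x, dotProduct_mulVec_self_of_transpose_eq_neg, hΩ, hC]
      using ev y 0
  have hQ : Ω *ᵥ x ⬝ᵥ C *ᵥ y - C *ᵥ x ⬝ᵥ Ω *ᵥ y ≠ 0 := by
    rwa [sub_mulVec, dotProduct_sub, ← mulVec_mulVec, ← mulVec_mulVec, skewΩ, skewC,
      neg_sub_neg] at hne
  have e₄ := ev (C *ᵥ x) (C *ᵥ y)
  have e₅ := ev (Ω *ᵥ x) (Ω *ᵥ y)
  simp only [h₀, h₁, h₂, h₃, zero_mul, zero_add] at e₄ e₅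
  simp only [skewΩ x, skewC x, dotProduct_comm (C *ᵥ y), dotProduct_comm (Ω *ᵥ y) (Ω *ᵥ x),
    dotProduct_comm (Ω *ᵥ y) (C *ᵥ x)] at e₄ e₅
  have h₄ : g 4 = 0 := by
    refine (mul_eq_zero.1 (?_ : g 4 * _ = 0)).resolve_right hQ
    linarith
  have h₅ : g 5 = 0 := by
    refine (mul_eq_zero.1 (?_ : g 5 * _ = 0)).resolve_right hQ
    linarith
  intro i
  fin_cases i <;> assumption

end ConstraintMap

theorem stmt17_general (r : ℕ) (hr : 0 < r) (Ω C : Matrix (Fin r) (Fin r) ℝ)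
    (hΩ : Ωᵀ = -Ω) (hC : Cᵀ = -C)
    (x y : Fin r → ℝ)
    (hx : x ⬝ᵥ x = 1) (hy : y ⬝ᵥ y = 1) (hxy : x ⬝ᵥ y = 0)
    (hx1 : x ⟨0, hr⟩ = 0) (hy1 : y ⟨0, hr⟩ ≠ 0)
    (hxΩy : x ⬝ᵥ (Ω *ᵥ y) = 0) (hxCy : x ⬝ᵥ (C *ᵥ y) = 0)
    (hne : y ⬝ᵥ ((Ω * C - C * Ω) *ᵥ x) ≠ 0) :
    LinearMap.rank
      (ContinuousLinearMap.toLinearMap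
        (fderiv ℝ (fun p : (Fin r → ℝ) × (Fin r → ℝ) =>
          ![p.1 ⬝ᵥ p.1, p.2 ⬝ᵥ p.2, p.1 ⬝ᵥ p.2, p.1 ⟨0, hr⟩,
            p.1 ⬝ᵥ (Ω *ᵥ p.2), p.1 ⬝ᵥ (C *ᵥ p.2)]) (x, y))) = 6 := by
  have hli := linearIndependent_fderiv_constraintMap hΩ hC hx hy hxy hx1 hy1 hxΩy hxCy hne
  exact (LinearMap.rank_eq_card_of_linearIndependent_apply _ hli).trans (by simp)

/-- Let `Ω`, `C` be skew-symmetric with `ΩC ≠ CΩ`, and let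
`F(x,y) = (‖x‖², ‖y‖², x·y, x₁, x·Ωy, x·Cy)`. At any point `(x,y)` with `‖x‖ = ‖y‖ = 1`,
`x·y = 0`, `x₁ = 0`, `y₁ ≠ 0`, `x·Ωy = x·Cy = 0` and `y·(ΩC - CΩ)x ≠ 0`, the differential
of `F` has rank 6. -/
theorem stmt17 (r : ℕ) (hr : 0 < r) (Ω C : Matrix (Fin r) (Fin r) ℝ)
    (hΩ : Ωᵀ = -Ω) (hC : Cᵀ = -C) (hnc : Ω * C ≠ C * Ω)
    (x y : Fin r → ℝ)
    (hx : x ⬝ᵥ x = 1) (hy : y ⬝ᵥ y = 1) (hxy : x ⬝ᵥ y = 0)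
    (hx1 : x ⟨0, hr⟩ = 0) (hy1 : y ⟨0, hr⟩ ≠ 0)
    (hxΩy : x ⬝ᵥ (Ω *ᵥ y) = 0) (hxCy : x ⬝ᵥ (C *ᵥ y) = 0)
    (hne : y ⬝ᵥ ((Ω * C - C * Ω) *ᵥ x) ≠ 0) :
    LinearMap.rank
      (ContinuousLinearMap.toLinearMap
        (fderiv ℝ (fun p : (Fin r → ℝ) × (Fin r → ℝ) =>
          ![p.1 ⬝ᵥ p.1, p.2 ⬝ᵥ p.2, p.1 ⬝ᵥ p.2, p.1 ⟨0, hr⟩,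
            p.1 ⬝ᵥ (Ω *ᵥ p.2), p.1 ⬝ᵥ (C *ᵥ p.2)]) (x, y))) = 6 :=
  stmt17_general r hr Ω C hΩ hC x y hx hy hxy hx1 hy1 hxΩy hxCy hne
end

section
/- Let Ω, C be skew-symmetric r×r matrices and (x,y) ∈ ℝ^r × ℝ^r with ‖x‖ = ‖y‖ = 1, x·y = 0, x₁ = 0, y₁ ≠ 0, x·Ωy = x·Cy = 0. If λ ∈ ℝ⁶ satisfies λ₁x + λ₃y + λ₄ε₁ + λ₅Ωy + λ₆Cy = 0 and λ₂y + λ₃x - λ₅Ωx - λ₆Cx = 0, then λ₁ = λ₂ = λ₃ = λ₄ = 0 and λ₅(Ωx,Ωy) + λ₆(Cx,Cy) = 0. -/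
open Matrix

lemma skew_self_aux {r : ℕ} (M : Matrix (Fin r) (Fin r) ℝ) (hM : Mᵀ = -M)
    (v : Fin r → ℝ) : v ⬝ᵥ (M *ᵥ v) = 0 := by
  have h1 : v ⬝ᵥ (M *ᵥ v) = (Mᵀ *ᵥ v) ⬝ᵥ v := by
    rw [Matrix.dotProduct_mulVec, Matrix.mulVec_transpose]
  rw [hM] at h1
  simp only [Matrix.neg_mulVec, neg_dotProduct] at h1
  rw [dotProduct_comm (M *ᵥ v) v] at h1
  linarith

lemma skew_swap_aux {r : ℕ} (M : Matrix (Fin r) (Fin r) ℝ) (hM : Mᵀ = -M)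
    (v w : Fin r → ℝ) : w ⬝ᵥ (M *ᵥ v) = -(v ⬝ᵥ (M *ᵥ w)) := by
  have h1 : w ⬝ᵥ (M *ᵥ v) = (Mᵀ *ᵥ w) ⬝ᵥ v := by
    rw [Matrix.dotProduct_mulVec, Matrix.mulVec_transpose]
  rw [hM] at h1
  simp only [Matrix.neg_mulVec, neg_dotProduct] at h1
  rw [dotProduct_comm (M *ᵥ w) v] at h1
  exact h1

/-- Let `Ω`, `C` be skew-symmetric and `(x,y)` with `‖x‖ = ‖y‖ = 1`, `x·y = 0`, `x₁ = 0`,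
`y₁ ≠ 0`, `x·Ωy = x·Cy = 0`. If `λ₁ x + λ₃ y + λ₄ ε₁ + λ₅ Ωy + λ₆ Cy = 0` and
`λ₂ y + λ₃ x - λ₅ Ωx - λ₆ Cx = 0`, then `λ₁ = λ₂ = λ₃ = λ₄ = 0` and
`λ₅ (Ωx, Ωy) + λ₆ (Cx, Cy) = 0`. -/
theorem stmt18 (r : ℕ) (hr : 0 < r) (Ω C : Matrix (Fin r) (Fin r) ℝ)
    (hΩ : Ωᵀ = -Ω) (hC : Cᵀ = -C)
    (x y : Fin r → ℝ)
    (hx : x ⬝ᵥ x = 1) (hy : y ⬝ᵥ y = 1) (hxy : x ⬝ᵥ y = 0)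
    (hx1 : x ⟨0, hr⟩ = 0) (hy1 : y ⟨0, hr⟩ ≠ 0)
    (hxΩy : x ⬝ᵥ (Ω *ᵥ y) = 0) (hxCy : x ⬝ᵥ (C *ᵥ y) = 0)
    (l1 l2 l3 l4 l5 l6 : ℝ)
    (heq1 : l1 • x + l3 • y + l4 • ((Pi.single (⟨0, hr⟩ : Fin r) (1 : ℝ) : Fin r → ℝ))
        + l5 • (Ω *ᵥ y) + l6 • (C *ᵥ y) = 0)
    (heq2 : l2 • y + l3 • x - l5 • (Ω *ᵥ x) - l6 • (C *ᵥ x) = 0) :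
    l1 = 0 ∧ l2 = 0 ∧ l3 = 0 ∧ l4 = 0 ∧
    l5 • (Ω *ᵥ x) + l6 • (C *ᵥ x) = 0 ∧ l5 • (Ω *ᵥ y) + l6 • (C *ᵥ y) = 0 := by
  have hxΩx := skew_self_aux Ω hΩ x
  have hxCx := skew_self_aux C hC x
  have hyΩy := skew_self_aux Ω hΩ y
  have hyCy := skew_self_aux C hC y
  have hyΩx : y ⬝ᵥ (Ω *ᵥ x) = 0 := by rw [skew_swap_aux Ω hΩ, hxΩy, neg_zero]
  have hyCx : y ⬝ᵥ (C *ᵥ x) = 0 := by rw [skew_swap_aux C hC, hxCy, neg_zero]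
  have hyx : y ⬝ᵥ x = 0 := by rw [dotProduct_comm]; exact hxy
  have d1x := congrArg (fun v => x ⬝ᵥ v) heq1
  have d1y := congrArg (fun v => y ⬝ᵥ v) heq1
  have d2x := congrArg (fun v => x ⬝ᵥ v) heq2
  have d2y := congrArg (fun v => y ⬝ᵥ v) heq2
  simp only [dotProduct_add, dotProduct_sub, dotProduct_smul,
    dotProduct_zero, smul_eq_mul, dotProduct_single, mul_one,
    hx, hy, hxy, hyx, hx1, hxΩy, hxCy, hxΩx, hxCx, hyΩy, hyCy, hyΩx, hyCx] at d1x d1y d2x d2y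
  -- d2x : l3 = 0 after simp, etc.
  have h3 : l3 = 0 := by linarith
  have h2 : l2 = 0 := by linarith
  have h1 : l1 = 0 := by linarith
  have h4 : l4 = 0 := by
    have : l4 * y ⟨0, hr⟩ = 0 := by linarith
    rcases mul_eq_zero.mp this with h | h
    · exact h
    · exact absurd h hy1
  refine ⟨h1, h2, h3, h4, ?_, ?_⟩
  · have := heq2
    rw [h2, h3] at this
    linear_combination (norm := module) -this
  · have := heq1
    rw [h1, h3, h4] at this
    linear_combination (norm := module) this
end

section
/- Let g = V₁ ⊕ V₂ be a step-2 stratified Lie algebra with dim V₁ = 4, dim V₂ = 3. There is no 2-dimensional subspace P ⊂ V₁ with dim [P,V₁] = 1 and dim [P,P] = 1. -/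
/-- In a step-2 stratified Lie algebra `g = V₁ ⊕ V₂` with `dim V₁ = 4`, `dim V₂ = 3`,
there is no 2-dimensional subspace `P ⊂ V₁` with `dim [P,V₁] = 1` and `dim [P,P] = 1`. -/
theorem stmt19 {L : Type*} [LieRing L] [LieAlgebra ℝ L] [FiniteDimensional ℝ L]
    (V₁ V₂ : Submodule ℝ L)
    (hsum : V₁ ⊔ V₂ = ⊤) (hinter : V₁ ⊓ V₂ = ⊥)
    (hstrat : bracketSpan V₁ V₁ = V₂)
    (hcentral : ∀ x : L, ∀ z ∈ V₂, ⁅x, z⁆ = 0)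
    (hV₁ : Module.finrank ℝ V₁ = 4) (hV₂ : Module.finrank ℝ V₂ = 3) :
    ¬ ∃ P : Submodule ℝ L, P ≤ V₁ ∧ Module.finrank ℝ P = 2 ∧
        Module.finrank ℝ (bracketSpan P V₁) = 1 ∧
        Module.finrank ℝ (bracketSpan P P) = 1 := by
  rintro ⟨P, hPV, hP2, hPV1, -⟩
  classical
  -- a complement `Q` of `P` inside `V₁`
  obtain ⟨Q', hQ'⟩ := (P.comap V₁.subtype).exists_isCompl
  set Q : Submodule ℝ L := Q'.map V₁.subtype with hQdef
  have hQV : Q ≤ V₁ := by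
    rintro x ⟨y, -, rfl⟩
    exact y.2
  have hPmap : (P.comap V₁.subtype).map V₁.subtype = P := by
    rw [Submodule.map_comap_subtype, inf_eq_right.mpr hPV]
  have hrankP' : Module.finrank ℝ (P.comap V₁.subtype) = 2 := by
    rw [← Submodule.finrank_map_subtype_eq V₁ (P.comap V₁.subtype), hPmap, hP2]
  have hcompl := Submodule.finrank_add_eq_of_isCompl hQ'
  rw [hrankP', hV₁] at hcompl
  have hQ2 : Module.finrank ℝ Q = 2 := by
    rw [hQdef, Submodule.finrank_map_subtype_eq]
    omega
  have hPQ : P ⊔ Q = V₁ := by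
    rw [← hPmap, hQdef, ← Submodule.map_sup, hQ'.sup_eq_top, Submodule.map_top,
      Submodule.range_subtype]
  -- a basis `y₁, y₂` of `Q`
  let b := Module.finBasisOfFinrankEq ℝ Q hQ2
  set y₁ : L := ((b 0 : Q) : L) with hy₁
  set y₂ : L := ((b 1 : Q) : L) with hy₂
  set w : L := ⁅y₁, y₂⁆ with hw
  have hQspan : ∀ x ∈ Q, x ∈ Submodule.span ℝ ({y₁, y₂} : Set L) := by
    intro x hx
    have h := b.sum_repr ⟨x, hx⟩
    rw [Fin.sum_univ_two] at h
    refine Submodule.mem_span_pair.mpr ⟨b.repr ⟨x, hx⟩ 0, b.repr ⟨x, hx⟩ 1, ?_⟩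
    have := congrArg (Subtype.val) h
    simpa using this
  have hbr : ∀ x ∈ Submodule.span ℝ ({y₁, y₂} : Set L),
      ∀ y ∈ Submodule.span ℝ ({y₁, y₂} : Set L),
      ⁅x, y⁆ ∈ Submodule.span ℝ ({w} : Set L) := by
    intro x hx y hy
    obtain ⟨s, t, rfl⟩ := Submodule.mem_span_pair.mp hx
    obtain ⟨s', t', rfl⟩ := Submodule.mem_span_pair.mp hy
    have hkey : ⁅s • y₁ + t • y₂, s' • y₁ + t' • y₂⁆ = (s * t' - t * s') • w := by
      have hskew : ⁅y₂, y₁⁆ = -w := by rw [hw, ← lie_skew]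
      simp only [lie_add, add_lie, lie_smul, smul_lie, lie_self, smul_zero, zero_add, add_zero,
        hskew, ← hw, smul_neg, smul_smul, sub_smul]
      module
    rw [hkey]
    exact Submodule.smul_mem _ _ (Submodule.mem_span_singleton_self w)
  -- the key inclusion
  set N : Submodule ℝ L := bracketSpan P V₁ ⊔ Submodule.span ℝ ({w} : Set L) with hN
  have hmemPV : ∀ x ∈ P, ∀ y ∈ V₁, ⁅x, y⁆ ∈ bracketSpan P V₁ := fun x hx y hy =>
    Submodule.subset_span ⟨x, hx, y, hy, rfl⟩
  have hle : bracketSpan V₁ V₁ ≤ N := by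
    apply Submodule.span_le.mpr
    rintro z ⟨x, hx, y, hy, rfl⟩
    rw [← hPQ] at hx hy
    obtain ⟨p, hp, q, hq, rfl⟩ := Submodule.mem_sup.mp hx
    obtain ⟨p', hp', q', hq', rfl⟩ := Submodule.mem_sup.mp hy
    have h1 : ⁅p, p' + q'⁆ ∈ N :=
      le_sup_left (α := Submodule ℝ L)
        (hmemPV p hp (p' + q') (add_mem (hPV hp') (hQV hq')))
    have h2 : ⁅q, p'⁆ ∈ N := by
      have : ⁅p', q⁆ ∈ bracketSpan P V₁ := hmemPV p' hp' q (hQV hq)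
      have hneg : ⁅q, p'⁆ = -⁅p', q⁆ := by rw [← lie_skew]
      rw [hneg]
      exact neg_mem (le_sup_left (α := Submodule ℝ L) this)
    have h3 : ⁅q, q'⁆ ∈ N :=
      le_sup_right (α := Submodule ℝ L) (hbr q (hQspan q hq) q' (hQspan q' hq'))
    have hexp : ⁅p + q, p' + q'⁆ = ⁅p, p' + q'⁆ + ⁅q, p'⁆ + ⁅q, q'⁆ := by
      simp only [add_lie, lie_add]
      abel
    rw [hexp]
    exact add_mem (add_mem h1 h2) h3
  -- dimension count
  have hw1 : Module.finrank ℝ (Submodule.span ℝ ({w} : Set L)) ≤ 1 := by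
    rcases eq_or_ne w 0 with h | h
    · rw [h, Submodule.span_zero_singleton]
      simp
    · rw [finrank_span_singleton h]
  have hsupeq := Submodule.finrank_sup_add_finrank_inf_eq (bracketSpan P V₁)
    (Submodule.span ℝ ({w} : Set L))
  have hNle : Module.finrank ℝ N ≤ 2 := by
    rw [hN]
    omega
  have : Module.finrank ℝ V₂ ≤ 2 := by
    rw [← hstrat]
    exact le_trans (Submodule.finrank_mono hle) hNle
  omega
end
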